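/- arXiv:1204.2051 — 9 statements merged into one kernel-verified Lean document; each statement's English description precedes it below -/
import Mathlib

section
/- Let Z be a complex Zinbiel algebra containing elements e_1, e_2, …, e_k such that e_1 ∘ e_i = e_{i+1} for all 1 ≤ i ≤ k−1. Then for all i, j ≥ 1 with 2 ≤ i+j ≤ k one has e_i ∘ e_j = C(i+j−1, j) · e_{i+j}, where C(i+j−1, j) denotes the binomial coefficient (i+j−1 choose j). -/
open Module Submodule

/-- The Zinbiel identity for a bilinear operation `mul` on a complex vector space:
`(x∘y)∘z = x∘(y∘z) + x∘(z∘y)`. -/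
def IsZinbiel {Z : Type*} [AddCommGroup Z] [Module ℂ Z] (mul : Z →ₗ[ℂ] Z →ₗ[ℂ] Z) : Prop :=
  ∀ x y z : Z, mul (mul x y) z = mul x (mul y z) + mul x (mul z y)

/-
By the Zinbiel identity with x = e₁,
e_{i+1} ∘ e_j = (e₁ ∘ e_i) ∘ e_j = e₁ ∘ (e_i ∘ e_j) + e₁ ∘ (e_j ∘ e_i),
so by induction on i + j both inner products are multiples of e_{i+j}, and e₁ ∘ e_{i+j} = e_{i+j+1}.
The coefficients add up by Pascal's rule: C(i+j-1, j) + C(i+j-1, i) = C(i+j, j).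
-/

theorem Nat.choose_add_choose_symm_eq (i j : ℕ) :
    (i + j + 1).choose (j + 1) + (i + j + 1).choose (i + 1) = (i + j + 2).choose (j + 1) := by
  rw [Nat.choose_succ_succ (i + j + 1) j, add_comm ((i + j + 1).choose j),
    show i + j + 1 = i + 1 + j by omega, Nat.choose_symm_add]

section

variable {Z : Type*} [AddCommGroup Z] [Module ℂ Z] {mul : Z →ₗ[ℂ] Z →ₗ[ℂ] Z} {k : ℕ}
  {e : ℕ → Z}

theorem IsZinbiel.mul_succ_succ (hzin : IsZinbiel mul)
    (he : ∀ i, 1 ≤ i → i ≤ k - 1 → mul (e 1) (e i) = e (i + 1)) (i j : ℕ)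
    (hk : i + j + 2 ≤ k) :
    mul (e (i + 1)) (e (j + 1)) = (((i + j + 1).choose (j + 1) : ℕ) : ℂ) • e (i + j + 2) := by
  match i with
  | 0 =>
    simp only [Nat.zero_add, Nat.choose_self, Nat.cast_one, one_smul]
    exact he (j + 1) (by omega) (by omega)
  | i + 1 =>
    have hij := hzin.mul_succ_succ he i j (by omega)
    have hji := hzin.mul_succ_succ he j i (by omega)
    rw [add_comm j i] at hji
    calc mul (e (i + 1 + 1)) (e (j + 1))
        = mul (mul (e 1) (e (i + 1))) (e (j + 1)) := by rw [he (i + 1) (by omega) (by omega)]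
      _ = (((i + j + 1).choose (j + 1) + (i + j + 1).choose (i + 1) : ℕ) : ℂ) •
            mul (e 1) (e (i + j + 2)) := by
        rw [hzin, hij, hji, map_smul, map_smul, ← add_smul, Nat.cast_add]
      _ = (((i + 1 + j + 1).choose (j + 1) : ℕ) : ℂ) • e (i + 1 + j + 2) := by
        rw [Nat.choose_add_choose_symm_eq, he (i + j + 2) (by omega) (by omega),
          show i + 1 + j + 1 = i + j + 2 by omega, show i + 1 + j + 2 = i + j + 2 + 1 by omega]
termination_by i + j

end

/-- Lemma 2 (`lemma1`): in a complex Zinbiel algebra with elements `e_1, …, e_k`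
satisfying `e_1 ∘ e_i = e_{i+1}` for `1 ≤ i ≤ k-1`, one has
`e_i ∘ e_j = C(i+j-1, j) • e_{i+j}` whenever `2 ≤ i + j ≤ k`. -/
theorem zinbiel_binomial_products
    {Z : Type*} [AddCommGroup Z] [Module ℂ Z]
    (mul : Z →ₗ[ℂ] Z →ₗ[ℂ] Z) (hzin : IsZinbiel mul)
    (k : ℕ) (e : ℕ → Z)
    (he : ∀ i, 1 ≤ i → i ≤ k - 1 → mul (e 1) (e i) = e (i + 1)) :
    ∀ i j, 1 ≤ i → 1 ≤ j → 2 ≤ i + j → i + j ≤ k →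
      mul (e i) (e j) = (((i + j - 1).choose j : ℕ) : ℂ) • e (i + j) := by
  intro i j hi hj _ hk
  obtain ⟨i, rfl⟩ := Nat.exists_add_one_eq.mpr hi
  obtain ⟨j, rfl⟩ := Nat.exists_add_one_eq.mpr hj
  rw [show i + 1 + (j + 1) - 1 = i + j + 1 by omega, show i + 1 + (j + 1) = i + j + 2 by omega]
  exact hzin.mul_succ_succ he i j (by omega)
end

section
/- Let Z be a complex Zinbiel algebra containing elements e_1, e_2, …, e_k such that e_1 ∘ e_i = e_{i+1} for all 1 ≤ i ≤ k−1. Then e_i ∘ e_1 = i · e_{i+1} for all 1 ≤ i ≤ k−1. -/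
open Module Submodule

theorem IsZinbiel.mul_right_eq_add_one_smul_mul_left {Z : Type*} [AddCommGroup Z] [Module ℂ Z]
    {mul : Z →ₗ[ℂ] Z →ₗ[ℂ] Z} (hzin : IsZinbiel mul) {a x y : Z} {c : ℂ}
    (hax : mul a x = y) (hxa : mul x a = c • y) :
    mul y a = (c + 1) • mul a y := by
  rw [← hax, hzin, hxa, hax, map_smul, add_smul, one_smul]

/-- In a complex Zinbiel algebra with elements `e_1, …, e_k` satisfying
`e_1 ∘ e_i = e_{i+1}` for `1 ≤ i ≤ k-1`, one has `e_i ∘ e_1 = i • e_{i+1}`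
for all `1 ≤ i ≤ k-1`. -/
theorem zinbiel_right_mul_e1
    {Z : Type*} [AddCommGroup Z] [Module ℂ Z]
    (mul : Z →ₗ[ℂ] Z →ₗ[ℂ] Z) (hzin : IsZinbiel mul)
    (k : ℕ) (e : ℕ → Z)
    (he : ∀ i, 1 ≤ i → i ≤ k - 1 → mul (e 1) (e i) = e (i + 1)) :
    ∀ i, 1 ≤ i → i ≤ k - 1 → mul (e i) (e 1) = ((i : ℕ) : ℂ) • e (i + 1) := by
  intro i hi
  induction i, hi using Nat.le_induction with
  | base => intro hk; simpa using he 1 le_rfl hk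
  | succ n hn ih =>
    intro hle
    rw [hzin.mul_right_eq_add_one_smul_mul_left (he n hn (by omega)) (ih (by omega)),
      he (n + 1) (by omega) hle, Nat.cast_succ]
end

section
/- Let Z be an n-dimensional naturally graded p-filiform complex Zinbiel algebra of second type, i.e., Z admits a basis {e_1, …, e_{n−p}, f_1, …, f_p} with e_1∘e_1 = 0, e_1∘e_i = e_{i+1} for 2 ≤ i ≤ n−p−1, e_1∘e_{n−p} = f_1 and e_1∘f_j = 0 for 1 ≤ j ≤ p. Then n − p ≤ 3. -/
open Module Submodule

/-- The adapted family `e_1, …, e_m, f_1, …, f_p` indexed by `Fin m ⊕ Fin p`. -/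
def adaptedFam {Z : Type*} (m p : ℕ) (e f : ℕ → Z) : Fin m ⊕ Fin p → Z :=
  Sum.elim (fun i => e ((i : ℕ) + 1)) (fun j => f ((j : ℕ) + 1))

/-!
If `x ∘ x = 0` in a Zinbiel algebra then `(x ∘ y) ∘ x = 0` for every `y`, and hence
`L_x³ = 0`. In a second-type algebra with `n - p ≥ 4` this gives `e₁ ∘ e₄ = L_{e₁}³ e₂ = 0`,
whereas `e₁ ∘ e₄` is the basis vector `f₁` (if `n - p = 4`) or `e₅` (if `n - p ≥ 5`).
-/

namespace IsZinbiel

variable {Z : Type*} [AddCommGroup Z] [Module ℂ Z] {mul : Z →ₗ[ℂ] Z →ₗ[ℂ] Z}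

theorem mul_mul_eq_zero_of_mul_self_eq_zero (hzin : IsZinbiel mul) {x : Z}
    (hx : mul x x = 0) (y : Z) :
    mul (mul x y) x = 0 := by
  have hsum : mul x (mul x y) + mul x (mul y x) = 0 := by
    rw [← hzin, hx, LinearMap.map_zero₂]
  rw [hzin, add_comm, hsum]

theorem mul_mul_mul_eq_zero_of_mul_self_eq_zero (hzin : IsZinbiel mul) {x : Z}
    (hx : mul x x = 0) (y : Z) :
    mul x (mul x (mul x y)) = 0 := by
  have h := hzin x x (mul x y)
  rwa [hx, LinearMap.map_zero₂, hzin.mul_mul_eq_zero_of_mul_self_eq_zero hx, map_zero, add_zero,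
    eq_comm] at h

end IsZinbiel

theorem second_type_dim_le_three_general
    {Z : Type*} [AddCommGroup Z] [Module ℂ Z]
    (mul : Z →ₗ[ℂ] Z →ₗ[ℂ] Z) (hzin : IsZinbiel mul)
    (n p : ℕ) (hp : 1 ≤ p)
    (e f : ℕ → Z)
    (hli : LinearIndependent ℂ (adaptedFam (n - p) p e f))
    (h11 : mul (e 1) (e 1) = 0)
    (hee : ∀ i, 2 ≤ i → i ≤ n - p - 1 → mul (e 1) (e i) = e (i + 1))
    (hetop : mul (e 1) (e (n - p)) = f 1) :
    n - p ≤ 3 := by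
  by_contra! hlong
  have he14 : mul (e 1) (e 4) = 0 := by
    rw [← hee 3 (by omega) (by omega), ← hee 2 (by omega) (by omega)]
    exact hzin.mul_mul_mul_eq_zero_of_mul_self_eq_zero h11 (e 2)
  rcases (show n - p = 4 ∨ 5 ≤ n - p by omega) with h4 | h5
  · rw [h4] at hetop
    exact hli.ne_zero (Sum.inr (⟨0, hp⟩ : Fin p)) (hetop.symm.trans he14)
  · exact hli.ne_zero (Sum.inl (⟨4, h5⟩ : Fin (n - p)))
      ((hee 4 (by omega) (by omega)).symm.trans he14)

/-- Proposition 1 (`prode`): a `p`-filiform `n`-dimensional complex Zinbiel algebra of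
second type, i.e. one admitting a basis `{e_1, …, e_{n-p}, f_1, …, f_p}` with
`e_1 ∘ e_1 = 0`, `e_1 ∘ e_i = e_{i+1}` for `2 ≤ i ≤ n-p-1`, `e_1 ∘ e_{n-p} = f_1` and
`e_1 ∘ f_j = 0` for `1 ≤ j ≤ p`, satisfies `n - p ≤ 3`. -/
theorem second_type_dim_le_three
    {Z : Type*} [AddCommGroup Z] [Module ℂ Z]
    (mul : Z →ₗ[ℂ] Z →ₗ[ℂ] Z) (hzin : IsZinbiel mul)
    (n p : ℕ) (hp : 1 ≤ p) (hpn : p < n)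
    (e f : ℕ → Z)
    (hli : LinearIndependent ℂ (adaptedFam (n - p) p e f))
    (hsp : Submodule.span ℂ (Set.range (adaptedFam (n - p) p e f)) = ⊤)
    (h11 : mul (e 1) (e 1) = 0)
    (hee : ∀ i, 2 ≤ i → i ≤ n - p - 1 → mul (e 1) (e i) = e (i + 1))
    (hetop : mul (e 1) (e (n - p)) = f 1)
    (hef : ∀ j, 1 ≤ j → j ≤ p → mul (e 1) (f j) = 0) :
    n - p ≤ 3 :=
  second_type_dim_le_three_general mul hzin n p hp e f hli h11 hee hetop
end

section
/- Let Z be an n-dimensional naturally graded p-filiform complex Zinbiel algebra of first type, with natural gradation Z = Z_1 ⊕ ⋯ ⊕ Z_{n−p}, adapted basis {e_1, …, e_{n−p}, f_1, …, f_p} with e_i ∈ Z_i, and let r_i be defined by f_i ∈ Z_{r_i} with r_1 ≤ r_2 ≤ … ≤ r_p. Then r_s ≤ s for all 1 ≤ s ≤ p. -/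
/-!
Take `q` minimal with `r_q > q` and put `k = r_q - 1 ≥ q`. By minimality and monotonicity no
`f_j` has degree `k`, so `Z_k = ℂ e_k`. The Zinbiel identity gives `e_i ∘ e_1 = i e_{i+1}` and
`(g ∘ e_1) ∘ e_t = (t + 1) g ∘ e_{t+1}`; descending on `t` this shows `Z_1 ∘ e_k ⊆ ℂ e_{k+1}`, hence
`Z_{k+1} = Z_1 ∘ Z_k ⊆ ℂ e_{k+1}`. But `f_q ∈ Z_{k+1}` is independent of `e_{k+1}`.
-/

open Module Submodule

/-- The square `Z ∘ Z` of the algebra. -/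
def algSq {Z : Type*} [AddCommGroup Z] [Module ℂ Z] (mul : Z →ₗ[ℂ] Z →ₗ[ℂ] Z) :
    Submodule ℂ Z :=
  Submodule.span ℂ {z | ∃ x y, z = mul x y}
/-- `C(Z) = (n-p, 1, …, 1)` (`p`-filiformity) expressed via the left multiplication
operators: for every `x ∉ Z²` the nilpotent operator `L_x` satisfies `L_x^(n-p) = 0`
and has rank at most `n-p-1`; this says exactly that the Jordan type of every `L_x`
is lexicographically at most `(n-p, 1, …, 1)`. -/
def CharSeqMax {Z : Type*} [AddCommGroup Z] [Module ℂ Z]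
    (mul : Z →ₗ[ℂ] Z →ₗ[ℂ] Z) (n p : ℕ) : Prop :=
  ∀ x : Z, x ∉ algSq mul →
    ((mul x : Module.End ℂ Z) ^ (n - p) = 0) ∧
      Module.finrank ℂ (LinearMap.range (mul x)) ≤ n - p - 1
theorem DirectSum.IsInternal.eq_span_image_of_mem {R M ι κ : Type*} [Ring R] [AddCommGroup M]
    [Module R M] [DecidableEq ι] {W : ι → Submodule R M} (hW : DirectSum.IsInternal W)
    {v : κ → M} (hv : span R (Set.range v) = ⊤) {d : κ → ι} (hvd : ∀ i, v i ∈ W (d i)) (k : ι) :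
    W k = span R (v '' {i | d i = k}) := by
  set S : ι → Submodule R M := fun j => span R (v '' {i | d i = j})
  have hSW : S ≤ W := fun j => span_le.mpr (by rintro _ ⟨i, rfl, rfl⟩; exact hvd i)
  have hS : iSup S = ⊤ := eq_top_iff.mpr <| hv ▸ span_le.mpr <| by
    rintro _ ⟨i, rfl⟩
    exact mem_iSup_of_mem (d i) (subset_span ⟨i, rfl, rfl⟩)
  exact (congrFun ((hW.submodule_iSupIndep.le_iff_eq_of_iSup_eq_top hS).mp hSW) k).symm

theorem le_span_e_of_forall_r_ne {R Z : Type*} [Ring R] [AddCommGroup Z] [Module R Z]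
    {N p : ℕ} {e f : ℕ → Z} {W : ℕ → Submodule R Z} {r : ℕ → ℕ}
    (hsp : span R (Set.range (adaptedFam N p e f)) = ⊤) (hWint : DirectSum.IsInternal W)
    (heW : ∀ i, 1 ≤ i → i ≤ N → e i ∈ W i) (hrmem : ∀ i, 1 ≤ i → i ≤ p → f i ∈ W (r i))
    {k : ℕ} (hk : ∀ j, 1 ≤ j → j ≤ p → r j ≠ k) :
    W k ≤ R ∙ e k := by
  rw [hWint.eq_span_image_of_mem hsp (d := Sum.elim (fun i => i + 1) (fun j => r (j + 1)))]
  · refine span_mono ?_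
    rintro _ ⟨i | j, hi, rfl⟩
    · simp only [Set.mem_ofPred_eq, Sum.elim_inl] at hi
      simp [adaptedFam, hi]
    · exact absurd hi (hk _ (by omega) (by omega))
  · rintro (i | j)
    · exact heW (i + 1) (by omega) i.isLt
    · exact hrmem (j + 1) (by omega) j.isLt

section Zinbiel

variable {Z : Type*} [AddCommGroup Z] [Module ℂ Z] {mul : Z →ₗ[ℂ] Z →ₗ[ℂ] Z} {e : ℕ → Z}
  {m : ℕ}

theorem IsZinbiel.mul_gen_eq_smul (hzin : IsZinbiel mul)
    (hee : ∀ i, 1 ≤ i → i ≤ m → mul (e 1) (e i) = e (i + 1)) :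
    ∀ i, 1 ≤ i → i ≤ m → mul (e i) (e 1) = (i : ℂ) • e (i + 1)
  | 0, h, _ => absurd h (by norm_num)
  | 1, _, h => by rw [hee 1 le_rfl h]; simp
  | i + 2, _, h => by
    have hz := hzin (e 1) (e (i + 1)) (e 1)
    rw [hee (i + 1) (by omega) (by omega), hzin.mul_gen_eq_smul hee (i + 1) (by omega) (by omega),
      map_smul, hee (i + 2) (by omega) h] at hz
    rw [hz]
    push_cast
    module

theorem IsZinbiel.mul_mul_gen (hzin : IsZinbiel mul)
    (hee : ∀ i, 1 ≤ i → i ≤ m → mul (e 1) (e i) = e (i + 1)) {t : ℕ} (ht : 1 ≤ t) (htm : t ≤ m)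
    (g : Z) : mul (mul g (e 1)) (e t) = ((t : ℂ) + 1) • mul g (e (t + 1)) := by
  rw [hzin, hee t ht htm, hzin.mul_gen_eq_smul hee t ht htm, map_smul, add_smul, one_smul, add_comm]

variable {W : ℕ → Submodule ℂ Z} {k : ℕ}

theorem IsZinbiel.mul_e_mem_span_of_le_span (hzin : IsZinbiel mul)
    (hee : ∀ i, 1 ≤ i → i ≤ k → mul (e 1) (e i) = e (i + 1))
    (hWmul : ∀ i j, ∀ x ∈ W i, ∀ y ∈ W j, mul x y ∈ W (i + j)) (he1 : e 1 ∈ W 1)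
    (hWk : W k ≤ ℂ ∙ e k) :
    ∀ s, 1 ≤ s → s ≤ k → ∀ j, j + s = k + 1 → ∀ g ∈ W j, mul g (e s) ∈ ℂ ∙ e (k + 1)
  | 0, h, _, _, _, _, _ => absurd h (by norm_num)
  | 1, _, hk, j, hj, g, hg => by
    obtain ⟨a, rfl⟩ := mem_span_singleton.mp (hWk (by rwa [show j = k by omega] at hg))
    rw [map_smul, LinearMap.smul_apply, hzin.mul_gen_eq_smul hee k hk le_rfl]
    exact smul_mem _ _ (smul_mem _ _ (mem_span_singleton_self _))
  | t + 2, _, htk, j, hj, g, hg => by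
    have hg1 := hzin.mul_e_mem_span_of_le_span hee hWmul he1 hWk (t + 1) (by omega) (by omega)
      (j + 1) (by omega) _ (hWmul j 1 g hg (e 1) he1)
    rw [hzin.mul_mul_gen hee (by omega) (by omega)] at hg1
    exact (smul_mem_iff _ (Nat.cast_add_one_ne_zero (t + 1))).mp hg1

theorem IsZinbiel.le_span_succ_of_le_span (hzin : IsZinbiel mul)
    (hee : ∀ i, 1 ≤ i → i ≤ k → mul (e 1) (e i) = e (i + 1))
    (hWmul : ∀ i j, ∀ x ∈ W i, ∀ y ∈ W j, mul x y ∈ W (i + j)) (he1 : e 1 ∈ W 1) (hk : 1 ≤ k)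
    (hWgen : W (k + 1) = span ℂ {z | ∃ x ∈ W 1, ∃ y ∈ W k, z = mul x y})
    (hWk : W k ≤ ℂ ∙ e k) :
    W (k + 1) ≤ ℂ ∙ e (k + 1) := by
  rw [hWgen, span_le]
  rintro _ ⟨x, hx, y, hy, rfl⟩
  obtain ⟨a, rfl⟩ := mem_span_singleton.mp (hWk hy)
  rw [map_smul]
  exact smul_mem _ _
    (hzin.mul_e_mem_span_of_le_span hee hWmul he1 hWk k hk le_rfl 1 (add_comm 1 k) x hx)

end Zinbiel

theorem graded_p_filiform_r_le_general
    {Z : Type*} [AddCommGroup Z] [Module ℂ Z]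
    (mul : Z →ₗ[ℂ] Z →ₗ[ℂ] Z) (hzin : IsZinbiel mul)
    (n p : ℕ)
    (e f : ℕ → Z)
    -- `{e_1, …, e_{n-p}, f_1, …, f_p}` is a basis of the `n`-dimensional algebra `Z`
    (hli : LinearIndependent ℂ (adaptedFam (n - p) p e f))
    (hsp : Submodule.span ℂ (Set.range (adaptedFam (n - p) p e f)) = ⊤)
    -- the basis is adapted of first type: `e_1 ∘ e_i = e_{i+1}`, `e_1 ∘ e_{n-p} = 0`,
    -- `e_1 ∘ f_j = 0`
    (hee : ∀ i, 1 ≤ i → i ≤ n - p - 1 → mul (e 1) (e i) = e (i + 1))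
    -- the natural gradation `Z = Z_1 ⊕ ⋯ ⊕ Z_{n-p}` : `W i` is the `i`-th component,
    -- the gradation is multiplicative and generated in degree one
    -- (`Z_{i+1} = Z_1 ∘ Z_i`, coming from `Z_i = Z^i/Z^{i+1}`), and `e_i ∈ Z_i`
    (W : ℕ → Submodule ℂ Z)
    (hWint : DirectSum.IsInternal W)
    (hWmul : ∀ i j, ∀ x ∈ W i, ∀ y ∈ W j, mul x y ∈ W (i + j))
    (hWgen : ∀ i, 1 ≤ i → W (i + 1) = Submodule.span ℂ {z | ∃ x ∈ W 1, ∃ y ∈ W i, z = mul x y})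
    (heW : ∀ i, 1 ≤ i → i ≤ n - p → e i ∈ W i)
    (r : ℕ → ℕ)
    (hrmem : ∀ i, 1 ≤ i → i ≤ p → f i ∈ W (r i))
    (hrmono : ∀ i j, 1 ≤ i → i ≤ j → j ≤ p → r i ≤ r j)
    (hrrange : ∀ i, 1 ≤ i → i ≤ p → 1 ≤ r i ∧ r i ≤ n - p) :
    ∀ q, 1 ≤ q → q ≤ p → r q ≤ q := by
  intro q
  induction q using Nat.strong_induction_on with
  | _ q IH =>
  intro hq1 hqp
  by_contra! hrq
  obtain ⟨k, hk⟩ : ∃ k, r q = k + 1 := ⟨r q - 1, by omega⟩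
  have hkN : k + 1 ≤ n - p := by have := (hrrange q hq1 hqp).2; omega
  have hfree : ∀ j, 1 ≤ j → j ≤ p → r j ≠ k := by
    intro j hj1 hjp
    rcases lt_or_ge j q with hjq | hjq
    · have := IH j hjq hj1 (by omega); omega
    · have := hrmono q j hq1 hjq hjp; omega
  have hWk1 := hzin.le_span_succ_of_le_span (fun i h1 h2 => hee i h1 (by omega)) hWmul
    (heW 1 le_rfl (by omega)) (by omega) (hWgen k (by omega))
    (le_span_e_of_forall_r_ne hsp hWint heW hrmem hfree)
  have hfq : f q ∈ ℂ ∙ e (k + 1) := hWk1 (hk ▸ hrmem q hq1 hqp)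
  have hindep := hli.notMem_span_image (s := {Sum.inl ⟨k, by omega⟩})
    (x := Sum.inr ⟨q - 1, by omega⟩) (by simp)
  rw [Set.image_singleton] at hindep
  exact hindep (by simpa [adaptedFam, Nat.sub_add_cancel hq1] using hfq)

/-- Theorem: for an `n`-dimensional naturally graded `p`-filiform complex Zinbiel
algebra of first type, with `f_i ∈ Z_{r_i}` and `r_1 ≤ r_2 ≤ ⋯ ≤ r_p`, one has
`r_s ≤ s` for all `1 ≤ s ≤ p`. -/
theorem graded_p_filiform_r_le
    {Z : Type*} [AddCommGroup Z] [Module ℂ Z]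
    (mul : Z →ₗ[ℂ] Z →ₗ[ℂ] Z) (hzin : IsZinbiel mul)
    (n p : ℕ) (hpn : p < n)
    (e f : ℕ → Z)
    -- `{e_1, …, e_{n-p}, f_1, …, f_p}` is a basis of the `n`-dimensional algebra `Z`
    (hli : LinearIndependent ℂ (adaptedFam (n - p) p e f))
    (hsp : Submodule.span ℂ (Set.range (adaptedFam (n - p) p e f)) = ⊤)
    -- the basis is adapted of first type: `e_1 ∘ e_i = e_{i+1}`, `e_1 ∘ e_{n-p} = 0`,
    -- `e_1 ∘ f_j = 0`
    (hee : ∀ i, 1 ≤ i → i ≤ n - p - 1 → mul (e 1) (e i) = e (i + 1))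
    (hetop : mul (e 1) (e (n - p)) = 0)
    (hef : ∀ j, 1 ≤ j → j ≤ p → mul (e 1) (f j) = 0)
    -- the natural gradation `Z = Z_1 ⊕ ⋯ ⊕ Z_{n-p}` : `W i` is the `i`-th component,
    -- the gradation is multiplicative and generated in degree one
    -- (`Z_{i+1} = Z_1 ∘ Z_i`, coming from `Z_i = Z^i/Z^{i+1}`), and `e_i ∈ Z_i`
    (W : ℕ → Submodule ℂ Z)
    (hW0 : W 0 = ⊥)
    (hWhigh : ∀ i, n - p < i → W i = ⊥)
    (hWint : DirectSum.IsInternal W)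
    (hWmul : ∀ i j, ∀ x ∈ W i, ∀ y ∈ W j, mul x y ∈ W (i + j))
    (hWgen : ∀ i, 1 ≤ i → W (i + 1) = Submodule.span ℂ {z | ∃ x ∈ W 1, ∃ y ∈ W i, z = mul x y})
    (heW : ∀ i, 1 ≤ i → i ≤ n - p → e i ∈ W i)
    -- `Z` is `p`-filiform with characteristic vector `e_1 ∉ Z²`
    (hfil : CharSeqMax mul n p)
    (he1sq : e 1 ∉ algSq mul)
    (r : ℕ → ℕ)
    (hrmem : ∀ i, 1 ≤ i → i ≤ p → f i ∈ W (r i))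
    (hrmono : ∀ i j, 1 ≤ i → i ≤ j → j ≤ p → r i ≤ r j)
    (hrrange : ∀ i, 1 ≤ i → i ≤ p → 1 ≤ r i ∧ r i ≤ n - p) :
    ∀ q, 1 ≤ q → q ≤ p → r q ≤ q :=
  graded_p_filiform_r_le_general mul hzin n p e f hli hsp hee W hWint hWmul hWgen heW r hrmem hrmono
    hrrange
end

section
/- Let Z be an n-dimensional naturally graded p-filiform complex Zinbiel algebra of first type with n−p ≥ 3, adapted basis {e_1,…,e_{n−p},f_1,…,f_p}, and suppose r_i = 1 for all 1 ≤ i ≤ p (i.e., all f_i lie in the first graded component Z_1). Then Z is split: Z ≅ NF_{n−p} ⊕ ℂ^p, where NF_{n−p} is the (n−p)-dimensional null-filiform Zinbiel algebra with products e_i∘e_j = C(i+j−1, j) e_{i+j} for 2 ≤ i+j ≤ n−p, and ℂ^p = ⟨f_1⟩ ⊕ ⋯ ⊕ ⟨f_p⟩ carries the zero multiplication. -/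
open Module Submodule

/-- The multiplication of the split algebra `NF_m ⊕ ℂ^q`: on coordinates, the first
component carries the null-filiform products `e_i ∘ e_j = C(i+j-1, j) e_{i+j}`
(coordinates `k : Fin m` representing `e_{k+1}`) and the second component carries the
zero multiplication. -/
noncomputable def NFmul (m q : ℕ) (x y : (Fin m → ℂ) × (Fin q → ℂ)) :
    (Fin m → ℂ) × (Fin q → ℂ) :=
  (fun k => ∑ i : Fin m, ∑ j : Fin m,
      if (i : ℕ) + (j : ℕ) + 1 = (k : ℕ)
      then ((((i : ℕ) + (j : ℕ) + 1).choose ((j : ℕ) + 1) : ℕ) : ℂ) * x.1 i * y.1 j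
      else 0,
   0)

/-! In the graded algebra `e_1` and all `f_j` lie in `Z_1`, and `Z_2` is spanned by `e_2`, so
`f_j ∘ e_1` and `f_j ∘ f_k` are multiples of `e_2`. The Zinbiel identity gives
`e_1 ∘ (f_j ∘ e_1) = (e_1 ∘ f_j) ∘ e_1 - e_1 ∘ (e_1 ∘ f_j) = 0` and
`(f_j ∘ f_k) ∘ e_1 = f_j ∘ (f_k ∘ e_1) + f_j ∘ (e_1 ∘ f_k) = 0`, whereas `e_1 ∘ e_2 = e_3` and
`e_2 ∘ e_1 = 2 e_3` are nonzero because `n - p ≥ 3`; hence both products vanish. The same identity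
then propagates `f_j ∘ e_1 = e_1 ∘ f_j = 0` along the chain `e_{i+1} = e_1 ∘ e_i`, and yields
`e_i ∘ e_j = C(i+j-1, j) e_{i+j}` by Pascal's rule. These are the structure constants of
`NF_{n-p} ⊕ ℂ^p`. -/

theorem eq_zero_of_mem_span_singleton_of_map_eq_zero {K V W : Type*} [DivisionRing K]
    [AddCommGroup V] [Module K V] [AddCommGroup W] [Module K W] (L : V →ₗ[K] W) {v z : V}
    (hz : z ∈ K ∙ v) (hLz : L z = 0) (hLv : L v ≠ 0) : z = 0 := by
  obtain ⟨c, rfl⟩ := mem_span_singleton.1 hz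
  rw [map_smul, smul_eq_zero] at hLz
  simp [hLz.resolve_right hLv]

theorem iSupIndep.le_span_image_of_mem {R M ι κ : Type*} [Ring R] [AddCommGroup M] [Module R M]
    {W : ι → Submodule R M} (hW : iSupIndep W) {v : κ → M} {deg : κ → ι}
    (hv : ∀ s, v s ∈ W (deg s)) (hspan : span R (Set.range v) = ⊤) (i : ι) :
    W i ≤ span R (v '' {s | deg s = i}) := by
  set S := {s | deg s = i}
  intro w hw
  have hsplit : w ∈ span R (v '' S) ⊔ span R (v '' Sᶜ) := by
    rw [← span_union, ← Set.image_union, Set.union_compl_self, Set.image_univ, hspan]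
    exact mem_top
  obtain ⟨x, hx, y, hy, rfl⟩ := mem_sup.1 hsplit
  have hxW : span R (v '' S) ≤ W i :=
    span_le.2 (by rintro _ ⟨s, hs, rfl⟩; exact hs ▸ hv s)
  have hyW : span R (v '' Sᶜ) ≤ ⨆ j ∈ ({i}ᶜ : Set ι), W j :=
    span_le.2 (by rintro _ ⟨s, hs, rfl⟩; exact mem_iSup_of_mem _ (mem_iSup_of_mem hs (hv s)))
  have hy0 : y = 0 := disjoint_def.1 (hW.disjoint_biSup (x := i) (by simp))
    y (by simpa using sub_mem hw (hxW hx)) (hyW hy)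
  simpa [hy0] using hx

theorem iSupIndep.le_span_adaptedFam {Z : Type*} [AddCommGroup Z] [Module ℂ Z]
    {W : ℕ → Submodule ℂ Z} (hW : iSupIndep W) {m p : ℕ} {e f : ℕ → Z}
    (hsp : span ℂ (Set.range (adaptedFam m p e f)) = ⊤)
    (heW : ∀ i, 1 ≤ i → i ≤ m → e i ∈ W i) (hfW : ∀ j, 1 ≤ j → j ≤ p → f j ∈ W 1)
    {k : ℕ} (hk : 2 ≤ k) : W k ≤ ℂ ∙ e k := by
  have hdeg : ∀ s, adaptedFam m p e f s ∈ W (Sum.elim (fun a : Fin m => (a : ℕ) + 1) 1 s) := by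
    rintro (a | j)
    · exact heW ((a : ℕ) + 1) (by omega) (by omega)
    · exact hfW ((j : ℕ) + 1) (by omega) (by omega)
  refine (hW.le_span_image_of_mem hdeg hsp k).trans (span_mono ?_)
  rintro _ ⟨a | j, hs, rfl⟩
  · simp_all [adaptedFam]
  · simp only [Set.mem_ofPred_eq, Sum.elim_inr, Pi.one_apply] at hs
    omega

namespace IsZinbiel

variable {Z : Type*} [AddCommGroup Z] [Module ℂ Z] {mul : Z →ₗ[ℂ] Z →ₗ[ℂ] Z}
  {e : ℕ → Z} {m : ℕ}

theorem mul_chain_eq_choose_smul (hzin : IsZinbiel mul)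
    (hee : ∀ i, 1 ≤ i → i ≤ m - 1 → mul (e 1) (e i) = e (i + 1)) {a c : ℕ}
    (h : a + c + 2 ≤ m) :
    mul (e (a + 1)) (e (c + 1)) = (((a + c + 1).choose (c + 1) : ℕ) : ℂ) • e (a + c + 2) := by
  obtain ⟨s, hs⟩ : ∃ s, a + c = s := ⟨_, rfl⟩
  induction s using Nat.strong_induction_on generalizing a c with
  | _ s ih =>
    rcases a with _ | a
    · simpa using hee (c + 1) (by omega) (by omega)
    · have hpascal : (a + c + 1).choose (c + 1) + (a + c + 1).choose (a + 1)
          = (a + 1 + c + 1).choose (c + 1) := by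
        have hsymm : (a + c + 1).choose (a + 1) = (a + c + 1).choose c := by
          rw [show a + c + 1 = a + 1 + c by ring, Nat.choose_symm_add]
        rw [hsymm, show a + 1 + c + 1 = a + c + 1 + 1 by ring,
          Nat.choose_succ_succ' (a + c + 1) c, add_comm]
      rw [← hee (a + 1) (by omega) (by omega), hzin, ih (a + c) (by omega) (by omega) rfl,
        ih (c + a) (by omega) (by omega) rfl, add_comm c a, map_smul, map_smul,
        hee (a + c + 2) (by omega) (by omega), ← add_smul, ← Nat.cast_add, hpascal,
        show a + c + 2 + 1 = a + 1 + c + 2 by ring]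

theorem mul_chain_right_eq_zero (hzin : IsZinbiel mul)
    (hee : ∀ i, 1 ≤ i → i ≤ m - 1 → mul (e 1) (e i) = e (i + 1)) {x : Z}
    (hx : mul x (e 1) = 0) {i : ℕ} (hi : 1 ≤ i) (him : i ≤ m) : mul x (e i) = 0 := by
  obtain rfl | ⟨t, rfl⟩ : i = 1 ∨ ∃ t, i = t + 2 := by
    rcases i with _ | _ | t <;> simp_all
  · exact hx
  · have hz := hzin x (e 1) (e (t + 1))
    rw [hx, map_zero, LinearMap.zero_apply, hee (t + 1) (by omega) (by omega),
      mul_chain_eq_choose_smul hzin hee (a := t) (c := 0) (by omega), map_smul] at hz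
    simp only [add_zero, zero_add, Nat.choose_one_right] at hz
    have h2 : ((t + 2 : ℕ) : ℂ) • mul x (e (t + 2)) = 0 := by
      linear_combination (norm := module) -hz
    exact (smul_eq_zero.1 h2).resolve_left (Nat.cast_ne_zero.2 (by omega))

theorem mul_chain_left_eq_zero (hzin : IsZinbiel mul)
    (hee : ∀ i, 1 ≤ i → i ≤ m - 1 → mul (e 1) (e i) = e (i + 1)) {x : Z}
    (h1x : mul (e 1) x = 0) (hx : ∀ i, 1 ≤ i → i ≤ m → mul x (e i) = 0) {i : ℕ} (hi : 1 ≤ i)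
    (him : i ≤ m) : mul (e i) x = 0 := by
  induction i, hi using Nat.le_induction with
  | base => exact h1x
  | succ i hi ih =>
    rw [← hee i hi (by omega), hzin, ih (by omega), hx i hi (by omega), map_zero, add_zero]

theorem left_mul_eq_zero_of_mem_span (hzin : IsZinbiel mul) {u v x : Z} (huv : mul u v ≠ 0)
    (hux : mul u x = 0) (hxu : mul x u ∈ ℂ ∙ v) : mul x u = 0 := by
  refine eq_zero_of_mem_span_singleton_of_map_eq_zero (mul u) hxu ?_ huv
  have := hzin u x u
  rw [hux, map_zero, LinearMap.zero_apply, map_zero, add_zero] at this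
  exact this.symm

theorem mul_eq_zero_of_mem_span (hzin : IsZinbiel mul) {u v x y : Z} (hvu : mul v u ≠ 0)
    (hyu : mul y u = 0) (huy : mul u y = 0) (hxy : mul x y ∈ ℂ ∙ v) : mul x y = 0 := by
  refine eq_zero_of_mem_span_singleton_of_map_eq_zero (mul.flip u) hxy ?_ hvu
  have := hzin x y u
  rw [hyu, huy, map_zero, add_zero] at this
  exact this

end IsZinbiel

lemma NFmul_eq_sum (m q : ℕ) (x y : (Fin m → ℂ) × (Fin q → ℂ)) :
    NFmul m q x y =
      (fun k : Fin m => ∑ i : Fin m, ∑ j : Fin m,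
        (if (i : ℕ) + (j : ℕ) + 1 = (k : ℕ)
          then ((((i : ℕ) + (j : ℕ) + 1).choose ((j : ℕ) + 1) : ℕ) : ℂ) else 0) * x.1 i * y.1 j,
       (0 : Fin q → ℂ)) := by
  simp only [NFmul, ite_mul, zero_mul]

noncomputable def NFmulₗ (m q : ℕ) :
    ((Fin m → ℂ) × (Fin q → ℂ)) →ₗ[ℂ] ((Fin m → ℂ) × (Fin q → ℂ)) →ₗ[ℂ]
      ((Fin m → ℂ) × (Fin q → ℂ)) :=
  LinearMap.mk₂ ℂ (NFmul m q)
    (fun x x' y => by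
      ext k <;> simp [NFmul_eq_sum, mul_add, add_mul, Finset.sum_add_distrib])
    (fun c x y => by
      ext k <;> simp [NFmul_eq_sum, Finset.mul_sum, mul_left_comm, mul_assoc])
    (fun x y y' => by
      ext k <;> simp [NFmul_eq_sum, mul_add, Finset.sum_add_distrib])
    (fun c x y => by
      ext k <;> simp [NFmul_eq_sum, Finset.mul_sum, mul_left_comm, mul_assoc])

lemma NFmul_single_single (m q : ℕ) (a c : Fin m) (u v : Fin q → ℂ) :
    NFmul m q (Pi.single a 1, u) (Pi.single c 1, v) =
      if h : (a : ℕ) + c + 1 < m then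
        ((((a : ℕ) + c + 1).choose ((c : ℕ) + 1) : ℕ) : ℂ) • (Pi.single ⟨(a : ℕ) + c + 1, h⟩ 1, 0)
      else 0 := by
  ext k
  · simp only [NFmul_eq_sum, Pi.single_apply, mul_ite, mul_one, mul_zero, Finset.sum_ite_eq',
      Finset.mem_univ, if_true]
    split_ifs with hk hm hm
    · simp [hk]
    · omega
    · simp [Fin.ext_iff, Ne.symm hk]
    · rfl
  · split_ifs <;> simp [NFmul]

lemma exists_equiv_NFmul_of_basis {Z : Type*} [AddCommGroup Z] [Module ℂ Z]
    (mul : Z →ₗ[ℂ] Z →ₗ[ℂ] Z) {m q : ℕ} (b : Basis (Fin m ⊕ Fin q) ℂ Z)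
    (hee : ∀ a c : Fin m, mul (b (.inl a)) (b (.inl c)) =
      if h : (a : ℕ) + c + 1 < m then
        ((((a : ℕ) + c + 1).choose ((c : ℕ) + 1) : ℕ) : ℂ) • b (.inl ⟨(a : ℕ) + c + 1, h⟩)
      else 0)
    (hef : ∀ a j, mul (b (.inl a)) (b (.inr j)) = 0)
    (hfe : ∀ j a, mul (b (.inr j)) (b (.inl a)) = 0)
    (hff : ∀ j k, mul (b (.inr j)) (b (.inr k)) = 0) :
    ∃ φ : Z ≃ₗ[ℂ] (Fin m → ℂ) × (Fin q → ℂ), ∀ x y, φ (mul x y) = NFmul m q (φ x) (φ y) := by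
  let φ := b.equiv ((Pi.basisFun ℂ (Fin m)).prod (Pi.basisFun ℂ (Fin q))) (Equiv.refl _)
  have hφ : mul.compr₂ φ.toLinearMap = (NFmulₗ m q).compl₁₂ φ.toLinearMap φ.toLinearMap := by
    refine LinearMap.ext_basis b b fun s t => ?_
    rcases s with a | j <;> rcases t with c | k
    · simp only [LinearMap.compr₂_apply, LinearMap.compl₁₂_apply, hee]
      split_ifs with h <;> simp [φ, NFmulₗ, NFmul_single_single, h]
    · simp [φ, hef, NFmulₗ, NFmul, Prod.ext_iff, funext_iff]
    · simp [φ, hfe, NFmulₗ, NFmul, Prod.ext_iff, funext_iff]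
    · simp [φ, hff, NFmulₗ, NFmul, Prod.ext_iff, funext_iff]
  exact ⟨φ, fun x y => LinearMap.congr_fun₂ hφ x y⟩

theorem graded_p_filiform_all_r_one_split_general
    {Z : Type*} [AddCommGroup Z] [Module ℂ Z]
    (mul : Z →ₗ[ℂ] Z →ₗ[ℂ] Z) (hzin : IsZinbiel mul)
    (n p : ℕ)
    (e f : ℕ → Z)
    -- `{e_1, …, e_{n-p}, f_1, …, f_p}` is a basis of the `n`-dimensional algebra `Z`
    (hli : LinearIndependent ℂ (adaptedFam (n - p) p e f))
    (hsp : Submodule.span ℂ (Set.range (adaptedFam (n - p) p e f)) = ⊤)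
    -- the basis is adapted of first type: `e_1 ∘ e_i = e_{i+1}`, `e_1 ∘ e_{n-p} = 0`,
    -- `e_1 ∘ f_j = 0`
    (hee : ∀ i, 1 ≤ i → i ≤ n - p - 1 → mul (e 1) (e i) = e (i + 1))
    (hef : ∀ j, 1 ≤ j → j ≤ p → mul (e 1) (f j) = 0)
    -- the natural gradation `Z = Z_1 ⊕ ⋯ ⊕ Z_{n-p}` : `W i` is the `i`-th component,
    -- the gradation is multiplicative and generated in degree one
    -- (`Z_{i+1} = Z_1 ∘ Z_i`, coming from `Z_i = Z^i/Z^{i+1}`), and `e_i ∈ Z_i`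
    (W : ℕ → Submodule ℂ Z)
    (hWhigh : ∀ i, n - p < i → W i = ⊥)
    (hWint : DirectSum.IsInternal W)
    (hWmul : ∀ i j, ∀ x ∈ W i, ∀ y ∈ W j, mul x y ∈ W (i + j))
    (heW : ∀ i, 1 ≤ i → i ≤ n - p → e i ∈ W i)
    (h3 : 3 ≤ n - p)
    (hfW1 : ∀ i, 1 ≤ i → i ≤ p → f i ∈ W 1) :
    ∃ φ : Z ≃ₗ[ℂ] (Fin (n - p) → ℂ) × (Fin p → ℂ),
      ∀ x y : Z, φ (mul x y) = NFmul (n - p) p (φ x) (φ y) := by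
  set m := n - p
  have hW2 : W 2 ≤ ℂ ∙ e 2 :=
    hWint.submodule_iSupIndep.le_span_adaptedFam hsp heW hfW1 le_rfl
  have he3 : e 3 ≠ 0 := by simpa [adaptedFam] using hli.ne_zero (Sum.inl ⟨2, by omega⟩)
  have hf_e1 : ∀ j, 1 ≤ j → j ≤ p → mul (f j) (e 1) = 0 := fun j hj hjp =>
    hzin.left_mul_eq_zero_of_mem_span (by rw [hee 2 (by omega) (by omega)]; exact he3)
      (hef j hj hjp) (hW2 (hWmul 1 1 _ (hfW1 j hj hjp) _ (heW 1 le_rfl (by omega))))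
  have he21 : mul (e 2) (e 1) ≠ 0 := by
    rw [hzin.mul_chain_eq_choose_smul hee (a := 1) (c := 0) (by omega)]
    simp [he3]
  have hf_e : ∀ j, 1 ≤ j → j ≤ p → ∀ i, 1 ≤ i → i ≤ m → mul (f j) (e i) = 0 :=
    fun j hj hjp _ => hzin.mul_chain_right_eq_zero hee (hf_e1 j hj hjp)
  have he_f : ∀ j, 1 ≤ j → j ≤ p → ∀ i, 1 ≤ i → i ≤ m → mul (e i) (f j) = 0 :=
    fun j hj hjp _ => hzin.mul_chain_left_eq_zero hee (hef j hj hjp) (hf_e j hj hjp)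
  refine exists_equiv_NFmul_of_basis mul (Basis.mk hli hsp.ge) (fun a c => ?_)
    (fun a j => ?_) (fun j a => ?_) (fun j k => ?_) <;>
    simp only [Basis.mk_apply, adaptedFam, Sum.elim_inl, Sum.elim_inr]
  · split_ifs with h
    · exact hzin.mul_chain_eq_choose_smul hee (by omega)
    · have := hWmul _ _ _ (heW ((a : ℕ) + 1) (by omega) (by omega)) _
        (heW ((c : ℕ) + 1) (by omega) (by omega))
      rwa [hWhigh _ (by omega), mem_bot] at this
  · exact he_f _ (by omega) (by omega) _ (by omega) (by omega)
  · exact hf_e _ (by omega) (by omega) _ (by omega) (by omega)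
  · exact hzin.mul_eq_zero_of_mem_span he21 (hf_e1 _ (by omega) (by omega))
      (hef _ (by omega) (by omega)) (hW2 (hWmul 1 1 _ (hfW1 _ (by omega) (by omega)) _
        (hfW1 _ (by omega) (by omega))))

/-- Lemma: if `n - p ≥ 3` and all the `f_i` lie in the first component `Z_1` of the
natural gradation (`r_i = 1` for all `i`), then `Z` splits:
`Z ≅ NF_{n-p} ⊕ ℂ^p`, an isomorphism of algebras onto the product of the
null-filiform algebra and the abelian algebra `ℂ^p`. -/
theorem graded_p_filiform_all_r_one_split
    {Z : Type*} [AddCommGroup Z] [Module ℂ Z]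
    (mul : Z →ₗ[ℂ] Z →ₗ[ℂ] Z) (hzin : IsZinbiel mul)
    (n p : ℕ) (hpn : p < n)
    (e f : ℕ → Z)
    -- `{e_1, …, e_{n-p}, f_1, …, f_p}` is a basis of the `n`-dimensional algebra `Z`
    (hli : LinearIndependent ℂ (adaptedFam (n - p) p e f))
    (hsp : Submodule.span ℂ (Set.range (adaptedFam (n - p) p e f)) = ⊤)
    -- the basis is adapted of first type: `e_1 ∘ e_i = e_{i+1}`, `e_1 ∘ e_{n-p} = 0`,
    -- `e_1 ∘ f_j = 0`
    (hee : ∀ i, 1 ≤ i → i ≤ n - p - 1 → mul (e 1) (e i) = e (i + 1))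
    (hetop : mul (e 1) (e (n - p)) = 0)
    (hef : ∀ j, 1 ≤ j → j ≤ p → mul (e 1) (f j) = 0)
    -- the natural gradation `Z = Z_1 ⊕ ⋯ ⊕ Z_{n-p}` : `W i` is the `i`-th component,
    -- the gradation is multiplicative and generated in degree one
    -- (`Z_{i+1} = Z_1 ∘ Z_i`, coming from `Z_i = Z^i/Z^{i+1}`), and `e_i ∈ Z_i`
    (W : ℕ → Submodule ℂ Z)
    (hW0 : W 0 = ⊥)
    (hWhigh : ∀ i, n - p < i → W i = ⊥)
    (hWint : DirectSum.IsInternal W)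
    (hWmul : ∀ i j, ∀ x ∈ W i, ∀ y ∈ W j, mul x y ∈ W (i + j))
    (hWgen : ∀ i, 1 ≤ i → W (i + 1) = Submodule.span ℂ {z | ∃ x ∈ W 1, ∃ y ∈ W i, z = mul x y})
    (heW : ∀ i, 1 ≤ i → i ≤ n - p → e i ∈ W i)
    -- `Z` is `p`-filiform with characteristic vector `e_1 ∉ Z²`
    (hfil : CharSeqMax mul n p)
    (he1sq : e 1 ∉ algSq mul)
    (h3 : 3 ≤ n - p)
    (hfW1 : ∀ i, 1 ≤ i → i ≤ p → f i ∈ W 1) :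
    ∃ φ : Z ≃ₗ[ℂ] (Fin (n - p) → ℂ) × (Fin p → ℂ),
      ∀ x y : Z, φ (mul x y) = NFmul (n - p) p (φ x) (φ y) :=
  graded_p_filiform_all_r_one_split_general mul hzin n p e f hli hsp hee hef W hWhigh hWint hWmul
    heW h3 hfW1
end

section
/- Let Z be an n-dimensional naturally graded p-filiform complex Zinbiel algebra of first type with n−p ≥ 3, adapted basis {e_1,…,e_{n−p},f_1,…,f_p}, and suppose r_i = 1 for all 1 ≤ i ≤ p (all f_i lie in the first graded component Z_1). Then every f_i (1 ≤ i ≤ p) lies in the center Cent(Z); in particular f_i ∘ e_j = 0 and e_j ∘ f_i = 0 for all 1 ≤ j ≤ n−p, and f_i ∘ f_j = 0 for all 1 ≤ i, j ≤ p. -/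
/-!
Since `e_1 ∘ f = 0`, the Zinbiel identity for `(e_1 ∘ f) ∘ e_1` gives
`e_1 ∘ (f ∘ e_1) = 0`. By the grading `f ∘ e_1` lies in `Z_2 = ℂ e_2`, and `e_1 ∘ e_2 = e_3 ≠ 0`,
so `f ∘ e_1 = 0`. The identity for `(f ∘ e_1) ∘ e_k`, together with `e_k ∘ e_1 = k e_{k+1}`, then
propagates this to `f ∘ e_k = 0`, and the one for `(e_1 ∘ e_k) ∘ f` to `e_k ∘ f = 0`. Finally
`f_i ∘ f_j = c e_2` and `(f_i ∘ f_j) ∘ e_1 = 0`, while `e_2 ∘ e_1 = 2 e_3`, so `c = 0`.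
-/

open Module Submodule

theorem mem_span_image_of_mem_of_iSupIndep {ι κ R M : Type*} [Ring R] [AddCommGroup M]
    [Module R M] {W : κ → Submodule R M} (hW : iSupIndep W) {v : ι → M}
    (hv : span R (Set.range v) = ⊤) (deg : ι → κ) (hdeg : ∀ i, v i ∈ W (deg i)) {d : κ}
    {w : M} (hw : w ∈ W d) : w ∈ span R (v '' {i | deg i = d}) := by
  have hrange : Set.range v = v '' {i | deg i = d} ∪ v '' {i | deg i = d}ᶜ := by
    rw [← Set.image_union, Set.union_compl_self, Set.image_univ]
  have hwspan : w ∈ span R (Set.range v) := hv ▸ mem_top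
  rw [hrange, span_union, mem_sup] at hwspan
  obtain ⟨x, hx, y, hy, rfl⟩ := hwspan
  have hx_le : span R (v '' {i | deg i = d}) ≤ W d :=
    span_le.2 <| by rintro _ ⟨i, hi, rfl⟩; exact hi ▸ hdeg i
  have hy_le : span R (v '' {i | deg i = d}ᶜ) ≤ ⨆ (j) (_ : j ≠ d), W j :=
    span_le.2 <| by
      rintro _ ⟨i, hi, rfl⟩
      exact mem_iSup_of_mem (deg i) (mem_iSup_of_mem hi (hdeg i))
  have hyW : y ∈ W d := by simpa using sub_mem hw (hx_le hx)
  rw [disjoint_def.1 (hW d) y hyW (hy_le hy), add_zero]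
  exact hx

theorem mem_span_singleton_of_mem_two {R M : Type*} [Ring R] [AddCommGroup M] [Module R M]
    {m p : ℕ} {e f : ℕ → M} {W : ℕ → Submodule R M} (hW : iSupIndep W)
    (hsp : span R (Set.range (adaptedFam m p e f)) = ⊤)
    (heW : ∀ i, 1 ≤ i → i ≤ m → e i ∈ W i) (hfW1 : ∀ j, 1 ≤ j → j ≤ p → f j ∈ W 1)
    {w : M} (hw : w ∈ W 2) : w ∈ R ∙ e 2 := by
  refine span_mono ?_ (mem_span_image_of_mem_of_iSupIndep hW hsp
    (Sum.elim (fun a => (a : ℕ) + 1) fun _ => 1) ?_ hw)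
  · rintro _ ⟨a | b, hk, rfl⟩
    · simp_all [adaptedFam]
    · simp at hk
  · rintro (a | b) <;> simp only [adaptedFam, Sum.elim_inl, Sum.elim_inr]
    · exact heW _ (by omega) (by omega)
    · exact hfW1 _ (by omega) (by omega)

theorem eq_zero_of_mem_span_singleton_of_map_eq_zero_s6 {K V V' : Type*} [Field K]
    [AddCommGroup V] [Module K V] [AddCommGroup V'] [Module K V'] {x w : V}
    (hw : w ∈ K ∙ x) (L : V →ₗ[K] V') (hx : L x ≠ 0) (hLw : L w = 0) : w = 0 := by
  obtain ⟨c, rfl⟩ := mem_span_singleton.1 hw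
  rw [map_smul, smul_eq_zero] at hLw
  simp [hLw.resolve_right hx]

theorem forall_adaptedFam {Z : Type*} {m p : ℕ} {e f : ℕ → Z} {P : Z → Prop} :
    (∀ k, P (adaptedFam m p e f k)) ↔
      (∀ i, 1 ≤ i → i ≤ m → P (e i)) ∧ ∀ j, 1 ≤ j → j ≤ p → P (f j) := by
  constructor
  · rintro h
    refine ⟨fun i hi him => ?_, fun j hj hjp => ?_⟩
    · simpa [adaptedFam, Nat.sub_add_cancel hi] using h (Sum.inl ⟨i - 1, by omega⟩)
    · simpa [adaptedFam, Nat.sub_add_cancel hj] using h (Sum.inr ⟨j - 1, by omega⟩)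
  · rintro ⟨he, hf⟩ (a | b)
    · exact he _ (by omega) a.isLt
    · exact hf _ (by omega) b.isLt

namespace IsZinbiel

variable {Z : Type*} [AddCommGroup Z] [Module ℂ Z] {mul : Z →ₗ[ℂ] Z →ₗ[ℂ] Z}
  (hzin : IsZinbiel mul)
include hzin

theorem mul_mul_self_eq_zero {x y : Z} (hxy : mul x y = 0) : mul x (mul y x) = 0 := by
  simpa [hxy] using (hzin x y x).symm

variable {e : ℕ → Z} {m : ℕ} (hee : ∀ i, 1 ≤ i → i ≤ m → mul (e 1) (e i) = e (i + 1))
include hee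

theorem mul_one_eq_smul :
    ∀ k, 1 ≤ k → k ≤ m → mul (e k) (e 1) = (k : ℂ) • e (k + 1) := by
  intro k hk
  induction k, hk using Nat.le_induction with
  | base => intro h1; simpa using hee 1 le_rfl h1
  | succ k hk ih =>
    intro hkm
    calc mul (e (k + 1)) (e 1) = mul (mul (e 1) (e k)) (e 1) := by rw [hee k hk (by omega)]
      _ = mul (e 1) (mul (e k) (e 1)) + mul (e 1) (mul (e 1) (e k)) := hzin _ _ _
      _ = ((k + 1 : ℕ) : ℂ) • e (k + 1 + 1) := by
        rw [ih (by omega), hee k hk (by omega), map_smul, hee (k + 1) (by omega) hkm]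
        push_cast
        rw [add_smul, one_smul]

theorem mul_eq_zero_of_mul_one_eq_zero {y : Z} (hy : mul y (e 1) = 0) :
    ∀ k, 1 ≤ k → k ≤ m + 1 → mul y (e k) = 0 := by
  rintro (_ | _ | k) hk hkm
  · omega
  · exact hy
  · have h := hzin y (e 1) (e (k + 1))
    rw [hy, hee _ (by omega) (by omega), mul_one_eq_smul hzin hee _ (by omega) (by omega),
      map_zero, LinearMap.zero_apply, map_smul] at h
    have hsmul : ((k + 2 : ℕ) : ℂ) • mul y (e (k + 1 + 1)) = 0 := by
      push_cast at h ⊢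
      linear_combination (norm := module) -h
    exact (smul_eq_zero.1 hsmul).resolve_left (by exact_mod_cast (k + 1).succ_ne_zero)

theorem mul_eq_zero_of_one_mul_eq_zero {y : Z} (h1 : mul (e 1) y = 0)
    (hy : ∀ k, 1 ≤ k → k ≤ m → mul y (e k) = 0) :
    ∀ k, 1 ≤ k → k ≤ m + 1 → mul (e k) y = 0 := by
  intro k hk
  induction k, hk using Nat.le_induction with
  | base => exact fun _ => h1
  | succ k hk ih =>
    intro hkm
    have h := hzin (e 1) (e k) y
    rwa [hee k hk (by omega), ih (by omega), hy k hk (by omega), map_zero, add_zero] at h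

end IsZinbiel

theorem graded_p_filiform_all_r_one_central_general
    {Z : Type*} [AddCommGroup Z] [Module ℂ Z]
    (mul : Z →ₗ[ℂ] Z →ₗ[ℂ] Z) (hzin : IsZinbiel mul)
    (n p : ℕ)
    (e f : ℕ → Z)
    -- `{e_1, …, e_{n-p}, f_1, …, f_p}` is a basis of the `n`-dimensional algebra `Z`
    (hli : LinearIndependent ℂ (adaptedFam (n - p) p e f))
    (hsp : Submodule.span ℂ (Set.range (adaptedFam (n - p) p e f)) = ⊤)
    -- the basis is adapted of first type: `e_1 ∘ e_i = e_{i+1}`, `e_1 ∘ e_{n-p} = 0`,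
    -- `e_1 ∘ f_j = 0`
    (hee : ∀ i, 1 ≤ i → i ≤ n - p - 1 → mul (e 1) (e i) = e (i + 1))
    (hef : ∀ j, 1 ≤ j → j ≤ p → mul (e 1) (f j) = 0)
    -- the natural gradation `Z = Z_1 ⊕ ⋯ ⊕ Z_{n-p}` : `W i` is the `i`-th component,
    -- the gradation is multiplicative and generated in degree one
    -- (`Z_{i+1} = Z_1 ∘ Z_i`, coming from `Z_i = Z^i/Z^{i+1}`), and `e_i ∈ Z_i`
    (W : ℕ → Submodule ℂ Z)
    (hWint : DirectSum.IsInternal W)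
    (hWmul : ∀ i j, ∀ x ∈ W i, ∀ y ∈ W j, mul x y ∈ W (i + j))
    (heW : ∀ i, 1 ≤ i → i ≤ n - p → e i ∈ W i)
    (h3 : 3 ≤ n - p)
    (hfW1 : ∀ i, 1 ≤ i → i ≤ p → f i ∈ W 1) :
    ∀ i, 1 ≤ i → i ≤ p →
      (∀ y : Z, mul (f i) y = 0 ∧ mul y (f i) = 0) ∧
      (∀ j, 1 ≤ j → j ≤ n - p → mul (f i) (e j) = 0 ∧ mul (e j) (f i) = 0) ∧
      (∀ j, 1 ≤ j → j ≤ p → mul (f i) (f j) = 0) := by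
  have he3 : e 3 ≠ 0 := by simpa [adaptedFam] using hli.ne_zero (Sum.inl ⟨2, by omega⟩)
  have hW2 : ∀ w ∈ W 2, w ∈ ℂ ∙ e 2 := fun w =>
    mem_span_singleton_of_mem_two hWint.submodule_iSupIndep hsp heW hfW1
  have hfe1 : ∀ j, 1 ≤ j → j ≤ p → mul (f j) (e 1) = 0 := fun j hj hjp =>
    eq_zero_of_mem_span_singleton_of_map_eq_zero_s6
      (hW2 _ (hWmul 1 1 _ (hfW1 j hj hjp) _ (heW 1 le_rfl (by omega)))) (mul (e 1))
      (by rwa [hee 2 (by omega) (by omega)]) (hzin.mul_mul_self_eq_zero (hef j hj hjp))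
  have hfe : ∀ j, 1 ≤ j → j ≤ p → ∀ k, 1 ≤ k → k ≤ n - p → mul (f j) (e k) = 0 :=
    fun j hj hjp k hk hkn =>
      hzin.mul_eq_zero_of_mul_one_eq_zero hee (hfe1 j hj hjp) k hk (by omega)
  have hekf : ∀ j, 1 ≤ j → j ≤ p → ∀ k, 1 ≤ k → k ≤ n - p → mul (e k) (f j) = 0 :=
    fun j hj hjp k hk hkn => hzin.mul_eq_zero_of_one_mul_eq_zero hee (hef j hj hjp)
      (fun k hk hkn => hfe j hj hjp k hk (by omega)) k hk (by omega)
  have hff : ∀ j, 1 ≤ j → j ≤ p → ∀ l, 1 ≤ l → l ≤ p → mul (f j) (f l) = 0 :=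
    fun j hj hjp l hl hlp => eq_zero_of_mem_span_singleton_of_map_eq_zero_s6
      (hW2 _ (hWmul 1 1 _ (hfW1 j hj hjp) _ (hfW1 l hl hlp))) (mul.flip (e 1))
      (by simp [hzin.mul_one_eq_smul hee 2 (by omega) (by omega), he3])
      (by simpa [hfe1 l hl hlp, hef l hl hlp] using hzin (f j) (f l) (e 1))
  intro i hi hip
  have hL : mul (f i) = 0 := LinearMap.ext_on_range hsp <|
    forall_adaptedFam (P := fun z => mul (f i) z = 0) |>.2 ⟨hfe i hi hip, hff i hi hip⟩
  have hR : mul.flip (f i) = 0 := LinearMap.ext_on_range hsp <|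
    forall_adaptedFam (P := fun z => mul z (f i) = 0) |>.2
      ⟨hekf i hi hip, fun l hl hlp => hff l hl hlp i hi hip⟩
  have hcent : ∀ y, mul (f i) y = 0 ∧ mul y (f i) = 0 := fun y =>
    ⟨by simp [hL], by simpa using LinearMap.congr_fun hR y⟩
  exact ⟨hcent, fun j _ _ => hcent (e j), fun j _ _ => (hcent (f j)).1⟩

/-- If `n - p ≥ 3` and all the `f_i` lie in the first component `Z_1` of the natural
gradation, then every `f_i` lies in the center: `f_i ∘ y = y ∘ f_i = 0` for all `y`;
in particular `f_i ∘ e_j = e_j ∘ f_i = 0` and `f_i ∘ f_j = 0`. -/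
theorem graded_p_filiform_all_r_one_central
    {Z : Type*} [AddCommGroup Z] [Module ℂ Z]
    (mul : Z →ₗ[ℂ] Z →ₗ[ℂ] Z) (hzin : IsZinbiel mul)
    (n p : ℕ) (hpn : p < n)
    (e f : ℕ → Z)
    -- `{e_1, …, e_{n-p}, f_1, …, f_p}` is a basis of the `n`-dimensional algebra `Z`
    (hli : LinearIndependent ℂ (adaptedFam (n - p) p e f))
    (hsp : Submodule.span ℂ (Set.range (adaptedFam (n - p) p e f)) = ⊤)
    -- the basis is adapted of first type: `e_1 ∘ e_i = e_{i+1}`, `e_1 ∘ e_{n-p} = 0`,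
    -- `e_1 ∘ f_j = 0`
    (hee : ∀ i, 1 ≤ i → i ≤ n - p - 1 → mul (e 1) (e i) = e (i + 1))
    (hetop : mul (e 1) (e (n - p)) = 0)
    (hef : ∀ j, 1 ≤ j → j ≤ p → mul (e 1) (f j) = 0)
    -- the natural gradation `Z = Z_1 ⊕ ⋯ ⊕ Z_{n-p}` : `W i` is the `i`-th component,
    -- the gradation is multiplicative and generated in degree one
    -- (`Z_{i+1} = Z_1 ∘ Z_i`, coming from `Z_i = Z^i/Z^{i+1}`), and `e_i ∈ Z_i`
    (W : ℕ → Submodule ℂ Z)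
    (hW0 : W 0 = ⊥)
    (hWhigh : ∀ i, n - p < i → W i = ⊥)
    (hWint : DirectSum.IsInternal W)
    (hWmul : ∀ i j, ∀ x ∈ W i, ∀ y ∈ W j, mul x y ∈ W (i + j))
    (hWgen : ∀ i, 1 ≤ i → W (i + 1) = Submodule.span ℂ {z | ∃ x ∈ W 1, ∃ y ∈ W i, z = mul x y})
    (heW : ∀ i, 1 ≤ i → i ≤ n - p → e i ∈ W i)
    -- `Z` is `p`-filiform with characteristic vector `e_1 ∉ Z²`
    (hfil : CharSeqMax mul n p)
    (he1sq : e 1 ∉ algSq mul)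
    (h3 : 3 ≤ n - p)
    (hfW1 : ∀ i, 1 ≤ i → i ≤ p → f i ∈ W 1) :
    ∀ i, 1 ≤ i → i ≤ p →
      (∀ y : Z, mul (f i) y = 0 ∧ mul y (f i) = 0) ∧
      (∀ j, 1 ≤ j → j ≤ n - p → mul (f i) (e j) = 0 ∧ mul (e j) (f i) = 0) ∧
      (∀ j, 1 ≤ j → j ≤ p → mul (f i) (f j) = 0) :=
  graded_p_filiform_all_r_one_central_general mul hzin n p e f hli hsp hee hef W hWint hWmul heW h3
    hfW1
end

section
/- Let Z be a p-filiform complex Zinbiel algebra of first type with adapted basis {e_1,…,e_{n−p},f_1,…,f_p}. If f_j ∘ e_i = 0 for some 1 ≤ i ≤ n−p−2 and 1 ≤ j ≤ p, then f_j ∘ e_{i+1} = f_j ∘ e_{i+2} = ⋯ = f_j ∘ e_{n−p−1} = 0. -/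
open Module Submodule

/-!
Applying the Zinbiel identity to `(e_1 ∘ e_k) ∘ e_1` gives, by induction, `e_k ∘ e_1 = k e_{k+1}`.
Applying it to `(x ∘ e_k) ∘ e_1` then gives
`(x ∘ e_k) ∘ e_1 = x ∘ (e_k ∘ e_1) + x ∘ (e_1 ∘ e_k) = (k + 1) (x ∘ e_{k+1})`,
so `x ∘ e_k = 0` forces `x ∘ e_{k+1} = 0` in characteristic zero.
-/

namespace IsZinbiel

variable {Z : Type*} [AddCommGroup Z] [Module ℂ Z] {mul : Z →ₗ[ℂ] Z →ₗ[ℂ] Z}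
  {e : ℕ → Z} {N : ℕ}

theorem chain_mul_gen (hzin : IsZinbiel mul)
    (hee : ∀ i, 1 ≤ i → i ≤ N → mul (e 1) (e i) = e (i + 1)) :
    ∀ k, 1 ≤ k → k ≤ N → mul (e k) (e 1) = (k : ℂ) • e (k + 1) := by
  intro k hk1
  induction k, hk1 using Nat.le_induction with
  | base => intro hN; simpa using hee 1 le_rfl hN
  | succ k hk1 ih =>
    intro hk
    have h := hzin (e 1) (e k) (e 1)
    rw [hee k hk1 (by omega), ih (by omega), map_smul, hee (k + 1) (by omega) hk] at h
    rw [h]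
    push_cast
    rw [add_smul, one_smul]

theorem mul_chain_mul_gen (hzin : IsZinbiel mul)
    (hee : ∀ i, 1 ≤ i → i ≤ N → mul (e 1) (e i) = e (i + 1))
    (x : Z) {k : ℕ} (hk1 : 1 ≤ k) (hk : k ≤ N) :
    mul (mul x (e k)) (e 1) = ((k : ℂ) + 1) • mul x (e (k + 1)) := by
  rw [hzin, chain_mul_gen hzin hee k hk1 hk, hee k hk1 hk, map_smul, add_smul, one_smul]

theorem mul_chain_succ_eq_zero (hzin : IsZinbiel mul)
    (hee : ∀ i, 1 ≤ i → i ≤ N → mul (e 1) (e i) = e (i + 1))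
    {x : Z} {k : ℕ} (hk1 : 1 ≤ k) (hk : k ≤ N) (hx : mul x (e k) = 0) :
    mul x (e (k + 1)) = 0 := by
  have h := mul_chain_mul_gen hzin hee x hk1 hk
  rw [hx, map_zero, LinearMap.zero_apply, eq_comm] at h
  exact (smul_eq_zero.mp h).resolve_left (by exact_mod_cast k.succ_ne_zero)

theorem mul_chain_eq_zero_of_le (hzin : IsZinbiel mul)
    (hee : ∀ i, 1 ≤ i → i ≤ N → mul (e 1) (e i) = e (i + 1))
    {x : Z} {i : ℕ} (hi1 : 1 ≤ i) (hx : mul x (e i) = 0) :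
    ∀ k, i ≤ k → k ≤ N + 1 → mul x (e k) = 0 := by
  intro k hik
  induction k, hik using Nat.le_induction with
  | base => exact fun _ => hx
  | succ k hik ih =>
    intro hk
    exact mul_chain_succ_eq_zero hzin hee (hi1.trans hik) (by omega) (ih (by omega))

end IsZinbiel

theorem first_type_fj_ei_zero_propagates_general
    {Z : Type*} [AddCommGroup Z] [Module ℂ Z]
    (mul : Z →ₗ[ℂ] Z →ₗ[ℂ] Z) (hzin : IsZinbiel mul)
    (n p : ℕ)
    (e f : ℕ → Z)
    -- the basis is adapted of first type: `e_1 ∘ e_i = e_{i+1}`, `e_1 ∘ e_{n-p} = 0`,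
    -- `e_1 ∘ f_j = 0`
    (hee : ∀ i, 1 ≤ i → i ≤ n - p - 1 → mul (e 1) (e i) = e (i + 1))
    (i j : ℕ) (hi1 : 1 ≤ i)
    (hzero : mul (f j) (e i) = 0) :
    ∀ k, i + 1 ≤ k → k ≤ n - p - 1 → mul (f j) (e k) = 0 :=
  fun k hik hk => hzin.mul_chain_eq_zero_of_le hee hi1 hzero k (by omega) (by omega)

/-- Lemma (`lemma`): in a `p`-filiform complex Zinbiel algebra of first type with
adapted basis, if `f_j ∘ e_i = 0` for some `1 ≤ i ≤ n-p-2` and `1 ≤ j ≤ p`, then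
`f_j ∘ e_{i+1} = ⋯ = f_j ∘ e_{n-p-1} = 0`. -/
theorem first_type_fj_ei_zero_propagates
    {Z : Type*} [AddCommGroup Z] [Module ℂ Z]
    (mul : Z →ₗ[ℂ] Z →ₗ[ℂ] Z) (hzin : IsZinbiel mul)
    (n p : ℕ) (hpn : p < n)
    (e f : ℕ → Z)
    -- `{e_1, …, e_{n-p}, f_1, …, f_p}` is a basis of the `n`-dimensional algebra `Z`
    (hli : LinearIndependent ℂ (adaptedFam (n - p) p e f))
    (hsp : Submodule.span ℂ (Set.range (adaptedFam (n - p) p e f)) = ⊤)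
    -- the basis is adapted of first type: `e_1 ∘ e_i = e_{i+1}`, `e_1 ∘ e_{n-p} = 0`,
    -- `e_1 ∘ f_j = 0`
    (hee : ∀ i, 1 ≤ i → i ≤ n - p - 1 → mul (e 1) (e i) = e (i + 1))
    (hetop : mul (e 1) (e (n - p)) = 0)
    (hef : ∀ j, 1 ≤ j → j ≤ p → mul (e 1) (f j) = 0)
    -- `Z` is `p`-filiform with characteristic vector `e_1 ∉ Z²`
    (hfil : CharSeqMax mul n p)
    (he1sq : e 1 ∉ algSq mul)
    (i j : ℕ) (hi1 : 1 ≤ i) (hi2 : i ≤ n - p - 2) (hj1 : 1 ≤ j) (hj2 : j ≤ p)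
    (hzero : mul (f j) (e i) = 0) :
    ∀ k, i + 1 ≤ k → k ≤ n - p - 1 → mul (f j) (e k) = 0 :=
  first_type_fj_ei_zero_propagates_general mul hzin n p e f hee i j hi1 hzero
end

section
/- Let Z be an n-dimensional naturally graded p-filiform complex Zinbiel algebra of first type, with natural gradation Z = Z_1 ⊕ ⋯ ⊕ Z_{n−p}, Z_1 = ⟨e_1, f_1, …, f_{s_1}⟩, where s_i = dim Z_i − 1. Then: (i) e_q ∘ f_j = 0 for all 1 ≤ q ≤ n−p and 1 ≤ j ≤ s_1; (ii) f_j ∘ e_q ∈ span{f_{s_1+1}, …, f_p} for all 1 ≤ q ≤ n−p−2 and 1 ≤ j ≤ s_1; (iii) f_j ∘ e_{n−p−1} ∈ span{e_{n−p}, f_{s_1+1}, …, f_p} for all 1 ≤ j ≤ s_1. -/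
/-!
Zinbiel algebras are right-commutative, `(x∘y)∘z = (x∘z)∘y`, so `e_1 ∘ f_j = 0` propagates to
`e_q ∘ f_j = (e_1 ∘ f_j) ∘ e_{q-1} = 0`, and the Zinbiel identity at `(e_1, f_j, e_q)` then gives
`e_1 ∘ (f_j ∘ e_q) = 0`. By the grading, `f_j ∘ e_q ∈ Z_{q+1} = ⟨e_{q+1}, f_k, …⟩` with all
`f_k` of index above `s_1`. Left multiplication by `e_1` kills the `f_k` but sends `e_{q+1}` to
`e_{q+2} ≠ 0` as long as `q ≤ n-p-2`, so the `e_{q+1}`-coefficient vanishes; for `q = n-p-1`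
only the grading is left.
-/
open Module Submodule

/-- `psum s k = s 1 + s 2 + ⋯ + s k`. -/
def psum (s : ℕ → ℕ) (k : ℕ) : ℕ := ∑ j ∈ Finset.Icc 1 k, s j

section Zinbiel

variable {Z : Type*} [AddCommGroup Z] [Module ℂ Z] {mul : Z →ₗ[ℂ] Z →ₗ[ℂ] Z}

theorem IsZinbiel.mul_mul_right_comm (hzin : IsZinbiel mul) (x y z : Z) :
    mul (mul x y) z = mul (mul x z) y := by
  rw [hzin, hzin x z y, add_comm]

theorem IsZinbiel.mul_mul_eq_zero_of_mul_eq_zero (hzin : IsZinbiel mul) {x z : Z}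
    (hxz : mul x z = 0) (y : Z) : mul (mul x y) z = 0 := by
  rw [hzin.mul_mul_right_comm, hxz, map_zero, LinearMap.zero_apply]

theorem IsZinbiel.mul_mul_eq_zero (hzin : IsZinbiel mul) {x y z : Z}
    (hxy : mul x y = 0) (hzy : mul z y = 0) : mul x (mul y z) = 0 := by
  have h := hzin x y z
  rwa [hxy, hzy, map_zero, LinearMap.zero_apply, map_zero, add_zero, eq_comm] at h

theorem IsZinbiel.chain_mul_eq_zero (hzin : IsZinbiel mul) {m : ℕ}
    {e : ℕ → Z} (hee : ∀ i, 1 ≤ i → i ≤ m - 1 → mul (e 1) (e i) = e (i + 1)) {x : Z}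
    (hx : mul (e 1) x = 0) : ∀ q, 1 ≤ q → q ≤ m → mul (e q) x = 0
  | 0, hq, _ => absurd hq (by omega)
  | 1, _, _ => hx
  | r + 2, _, hqm => by
    rw [← hee (r + 1) (by omega) (by omega)]
    exact hzin.mul_mul_eq_zero_of_mul_eq_zero hx _

end Zinbiel

theorem psum_mono (s : ℕ → ℕ) : Monotone (psum s) := fun _ _ hab =>
  Finset.sum_le_sum_of_subset (Finset.Icc_subset_Icc_right hab)

@[simp]
theorem psum_one (s : ℕ → ℕ) : psum s 1 = s 1 := by
  simp [psum]

theorem Icc_psum_subset {s : ℕ → ℕ} {i k : ℕ} (hi : 2 ≤ i) (hik : i ≤ k) :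
    Set.Icc (psum s (i - 1) + 1) (psum s i) ⊆ Set.Icc (s 1 + 1) (psum s k) :=
  Set.Icc_subset_Icc (Nat.add_le_add_right (psum_one s ▸ psum_mono s (by omega)) 1)
    (psum_mono s hik)

theorem DirectSum.IsInternal.eq_top_of_forall_ne_eq_bot {ι R M : Type*} [DecidableEq ι]
    [Semiring R] [AddCommMonoid M] [Module R M] {W : ι → Submodule R M}
    (hW : DirectSum.IsInternal W) {k : ι} (hk : ∀ i ≠ k, W i = ⊥) : W k = ⊤ := by
  rw [← hW.submodule_iSup_eq_top, iSup_split_single W k]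
  refine (sup_eq_left.mpr (iSup₂_le fun i hi => ?_)).symm
  simp [hk i hi]

theorem Submodule.mem_span_of_mem_span_insert_of_apply_eq_zero {K M N : Type*} [Field K]
    [AddCommGroup M] [Module K M] [AddCommGroup N] [Module K N] {φ : M →ₗ[K] N} {a x : M}
    {S : Set M} (hx : x ∈ span K (insert a S)) (hS : ∀ y ∈ S, φ y = 0) (hφx : φ x = 0)
    (hφa : φ a ≠ 0) : x ∈ span K S := by
  obtain ⟨c, y, hy, rfl⟩ := mem_span_insert.mp hx
  have hφy : φ y = 0 := (span_le (p := LinearMap.ker φ)).mpr hS hy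
  rw [map_add, map_smul, hφy, add_zero, smul_eq_zero] at hφx
  rw [hφx.resolve_right hφa, zero_smul, zero_add]
  exact hy

theorem mul_eq_zero_of_isInternal_of_ne_one_eq_bot {R Z : Type*} [CommSemiring R]
    [AddCommMonoid Z] [Module R Z] {mul : Z →ₗ[R] Z →ₗ[R] Z} {W : ℕ → Submodule R Z} (hWint : DirectSum.IsInternal W)
    (hWmul : ∀ i j, ∀ x ∈ W i, ∀ y ∈ W j, mul x y ∈ W (i + j)) (hW : ∀ i ≠ 1, W i = ⊥)
    (x y : Z) : mul x y = 0 := by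
  have hW1 : W 1 = ⊤ := hWint.eq_top_of_forall_ne_eq_bot hW
  have hxy := hWmul 1 1 x (hW1 ▸ mem_top) y (hW1 ▸ mem_top)
  rwa [hW 2 (by omega), mem_bot] at hxy

theorem graded_p_filiform_step_products_general
    {Z : Type*} [AddCommGroup Z] [Module ℂ Z]
    (mul : Z →ₗ[ℂ] Z →ₗ[ℂ] Z) (hzin : IsZinbiel mul)
    (n p : ℕ) (hpn : p < n)
    (e f : ℕ → Z)
    -- `{e_1, …, e_{n-p}, f_1, …, f_p}` is a basis of the `n`-dimensional algebra `Z`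
    (hli : LinearIndependent ℂ (adaptedFam (n - p) p e f))
    -- the basis is adapted of first type: `e_1 ∘ e_i = e_{i+1}`, `e_1 ∘ e_{n-p} = 0`,
    -- `e_1 ∘ f_j = 0`
    (hee : ∀ i, 1 ≤ i → i ≤ n - p - 1 → mul (e 1) (e i) = e (i + 1))
    (hef : ∀ j, 1 ≤ j → j ≤ p → mul (e 1) (f j) = 0)
    -- the natural gradation `Z = Z_1 ⊕ ⋯ ⊕ Z_{n-p}` : `W i` is the `i`-th component,
    -- the gradation is multiplicative and generated in degree one
    -- (`Z_{i+1} = Z_1 ∘ Z_i`, coming from `Z_i = Z^i/Z^{i+1}`), and `e_i ∈ Z_i`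
    (W : ℕ → Submodule ℂ Z)
    (hW0 : W 0 = ⊥)
    (hWhigh : ∀ i, n - p < i → W i = ⊥)
    (hWint : DirectSum.IsInternal W)
    (hWmul : ∀ i j, ∀ x ∈ W i, ∀ y ∈ W j, mul x y ∈ W (i + j))
    (heW : ∀ i, 1 ≤ i → i ≤ n - p → e i ∈ W i)
    -- `s_i = dim Z_i - 1` and
    -- `Z_i = ⟨e_i, f_{s_1+⋯+s_{i-1}+1}, …, f_{s_1+⋯+s_i}⟩` for `1 ≤ i ≤ n-p`
    (s : ℕ → ℕ)
    (hsum : psum s (n - p) = p)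
    (hWspan : ∀ i, 1 ≤ i → i ≤ n - p →
      W i = Submodule.span ℂ (insert (e i) (f '' Set.Icc (psum s (i - 1) + 1) (psum s i))))
    :
    (∀ q j, 1 ≤ q → q ≤ n - p → 1 ≤ j → j ≤ s 1 → mul (e q) (f j) = 0) ∧
    (∀ q j, 1 ≤ q → q ≤ n - p - 2 → 1 ≤ j → j ≤ s 1 →
      mul (f j) (e q) ∈ Submodule.span ℂ (f '' Set.Icc (s 1 + 1) p)) ∧
    (∀ j, 1 ≤ j → j ≤ s 1 →
      mul (f j) (e (n - p - 1)) ∈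
        Submodule.span ℂ (insert (e (n - p)) (f '' Set.Icc (s 1 + 1) p))) := by
  have hs1 : s 1 ≤ p := hsum ▸ psum_one s ▸ psum_mono s (by omega : 1 ≤ n - p)
  have hfW1 : ∀ j, 1 ≤ j → j ≤ s 1 → f j ∈ W 1 := fun j hj hjs => by
    rw [hWspan 1 le_rfl (by omega)]
    exact subset_span (Set.mem_insert_of_mem _ ⟨j, by simp [psum]; omega, rfl⟩)
  have hWle : ∀ i, 2 ≤ i → i ≤ n - p →
      W i ≤ span ℂ (insert (e i) (f '' Set.Icc (s 1 + 1) p)) := fun i hi hin => by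
    rw [hWspan i (by omega) hin, ← hsum]
    exact span_mono (Set.insert_subset_insert (Set.image_mono (Icc_psum_subset hi hin)))
  have hef_all : ∀ q k, 1 ≤ q → q ≤ n - p → 1 ≤ k → k ≤ p → mul (e q) (f k) = 0 :=
    fun q k hq hqm hk hkp => hzin.chain_mul_eq_zero hee (hef k hk hkp) q hq hqm
  refine ⟨fun q j hq hqm hj hjs => hef_all q j hq hqm hj (hjs.trans hs1), ?_, ?_⟩
  · intro q j hq hqm hj hjs
    have hg : mul (f j) (e q) ∈ W (q + 1) :=
      add_comm 1 q ▸ hWmul 1 q _ (hfW1 j hj hjs) _ (heW q hq (by omega))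
    refine mem_span_of_mem_span_insert_of_apply_eq_zero (φ := mul (e 1))
      (hWle (q + 1) (by omega) (by omega) hg) ?_ ?_ ?_
    · rintro _ ⟨k, hk, rfl⟩
      exact hef k ((Nat.le_add_left 1 _).trans hk.1) hk.2
    · exact hzin.mul_mul_eq_zero (hef j hj (hjs.trans hs1))
        (hef_all q j hq (by omega) hj (hjs.trans hs1))
    · rw [hee (q + 1) (by omega) (by omega)]
      exact hli.ne_zero (Sum.inl ⟨q + 1, by omega⟩)
  · intro j hj hjs
    obtain hm | hm := (show n - p = 1 ∨ 2 ≤ n - p by omega)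
    · -- `e (n - p - 1) = e 0` is unconstrained here, but `Z = Z_1` has trivial square
      rw [mul_eq_zero_of_isInternal_of_ne_one_eq_bot hWint hWmul fun i hi => by
        obtain rfl | hi0 := Nat.eq_zero_or_pos i
        exacts [hW0, hWhigh i (by omega)]]
      exact zero_mem _
    · refine hWle (n - p) hm le_rfl ?_
      have h := hWmul 1 (n - p - 1) _ (hfW1 j hj hjs) _ (heW _ (by omega) (by omega))
      rwa [show 1 + (n - p - 1) = n - p by omega] at h

/-- Step I of Proposition (`s<s`): (i) `e_q ∘ f_j = 0` for `1 ≤ q ≤ n-p`, `1 ≤ j ≤ s_1`;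
(ii) `f_j ∘ e_q ∈ ⟨f_{s_1+1}, …, f_p⟩` for `1 ≤ q ≤ n-p-2`;
(iii) `f_j ∘ e_{n-p-1} ∈ ⟨e_{n-p}, f_{s_1+1}, …, f_p⟩`. -/
theorem graded_p_filiform_step_products
    {Z : Type*} [AddCommGroup Z] [Module ℂ Z]
    (mul : Z →ₗ[ℂ] Z →ₗ[ℂ] Z) (hzin : IsZinbiel mul)
    (n p : ℕ) (hpn : p < n)
    (e f : ℕ → Z)
    -- `{e_1, …, e_{n-p}, f_1, …, f_p}` is a basis of the `n`-dimensional algebra `Z`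
    (hli : LinearIndependent ℂ (adaptedFam (n - p) p e f))
    (hsp : Submodule.span ℂ (Set.range (adaptedFam (n - p) p e f)) = ⊤)
    -- the basis is adapted of first type: `e_1 ∘ e_i = e_{i+1}`, `e_1 ∘ e_{n-p} = 0`,
    -- `e_1 ∘ f_j = 0`
    (hee : ∀ i, 1 ≤ i → i ≤ n - p - 1 → mul (e 1) (e i) = e (i + 1))
    (hetop : mul (e 1) (e (n - p)) = 0)
    (hef : ∀ j, 1 ≤ j → j ≤ p → mul (e 1) (f j) = 0)
    -- the natural gradation `Z = Z_1 ⊕ ⋯ ⊕ Z_{n-p}` : `W i` is the `i`-th component,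
    -- the gradation is multiplicative and generated in degree one
    -- (`Z_{i+1} = Z_1 ∘ Z_i`, coming from `Z_i = Z^i/Z^{i+1}`), and `e_i ∈ Z_i`
    (W : ℕ → Submodule ℂ Z)
    (hW0 : W 0 = ⊥)
    (hWhigh : ∀ i, n - p < i → W i = ⊥)
    (hWint : DirectSum.IsInternal W)
    (hWmul : ∀ i j, ∀ x ∈ W i, ∀ y ∈ W j, mul x y ∈ W (i + j))
    (hWgen : ∀ i, 1 ≤ i → W (i + 1) = Submodule.span ℂ {z | ∃ x ∈ W 1, ∃ y ∈ W i, z = mul x y})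
    (heW : ∀ i, 1 ≤ i → i ≤ n - p → e i ∈ W i)
    -- `Z` is `p`-filiform with characteristic vector `e_1 ∉ Z²`
    (hfil : CharSeqMax mul n p)
    (he1sq : e 1 ∉ algSq mul)
    -- `s_i = dim Z_i - 1` and
    -- `Z_i = ⟨e_i, f_{s_1+⋯+s_{i-1}+1}, …, f_{s_1+⋯+s_i}⟩` for `1 ≤ i ≤ n-p`
    (s : ℕ → ℕ) (hs0 : s 0 = 0) (hshigh : ∀ i, n - p < i → s i = 0)
    (hsum : psum s (n - p) = p)
    (hWspan : ∀ i, 1 ≤ i → i ≤ n - p →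
      W i = Submodule.span ℂ (insert (e i) (f '' Set.Icc (psum s (i - 1) + 1) (psum s i))))
    :
    (∀ q j, 1 ≤ q → q ≤ n - p → 1 ≤ j → j ≤ s 1 → mul (e q) (f j) = 0) ∧
    (∀ q j, 1 ≤ q → q ≤ n - p - 2 → 1 ≤ j → j ≤ s 1 →
      mul (f j) (e q) ∈ Submodule.span ℂ (f '' Set.Icc (s 1 + 1) p)) ∧
    (∀ j, 1 ≤ j → j ≤ s 1 →
      mul (f j) (e (n - p - 1)) ∈
        Submodule.span ℂ (insert (e (n - p)) (f '' Set.Icc (s 1 + 1) p))) :=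
  graded_p_filiform_step_products_general mul hzin n p hpn e f hli hee hef W hW0 hWhigh hWint hWmul
    heW s hsum hWspan
end

section
/- Let Z be an n-dimensional naturally graded p-filiform complex Zinbiel algebra of first type (with the adapted basis normalized as in the preceding structure results), and let γ_{ij} ∈ ℂ be the scalars defined by f_i ∘ f_j = γ_{ij} e_2 for 1 ≤ i, j ≤ s_1. Then f_{s_1+⋯+s_t+i} ∘ f_{s_1+⋯+s_k+j} = γ_{ij} (t+k+1)! e_{t+k+2} for all 0 ≤ k+t ≤ n−p−2, 1 ≤ i ≤ s_{t+2} and 1 ≤ j ≤ s_{k+2}. -/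
open Module Submodule

/-!
Write `R` for right multiplication by `e_1`. The normalization says
`f_{s_1+⋯+s_t+i} = R^t f_i`, and since `e_1 ∘ y = 0` for every `f`-vector `y`, the Zinbiel
identity gives `(x ∘ y) ∘ e_1 = x ∘ (y ∘ e_1) = (x ∘ e_1) ∘ y`: `R` passes through either
factor of such a product. Hence `f_{s_1+⋯+s_t+i} ∘ f_{s_1+⋯+s_k+j} = R^(t+k) (f_i ∘ f_j)
= γ_{ij} R^(t+k+1) e_1`, and `e_q ∘ e_1 = q e_{q+1}` (again by the Zinbiel identity) turns
this into `γ_{ij} (t+k+1)! e_{t+k+2}`.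

The gradation is needed only for `s_1 ≥ s_2 ≥ ⋯ ≥ s_{n-p}`, without which the normalization
could not be iterated: if `s_{q+1} < s_{q+2}`, the normalization would make `R` send a basis
vector `f` of degree `q+2` to another one of degree `q+2`, while `R` raises degrees by one.
-/

namespace IsZinbiel

variable {Z : Type*} [AddCommGroup Z] [Module ℂ Z] {mul : Z →ₗ[ℂ] Z →ₗ[ℂ] Z}

theorem mul_mul_eq_of_mul_eq_zero (hzin : IsZinbiel mul) {a y : Z} (h : mul a y = 0) (x : Z) :
    mul (mul x y) a = mul x (mul y a) := by
  rw [hzin, h, map_zero, add_zero]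

theorem mul_mul_comm_of_mul_eq_zero (hzin : IsZinbiel mul) {a y : Z} (h : mul a y = 0)
    (x : Z) : mul (mul x a) y = mul (mul x y) a := by
  rw [hzin, h, map_zero, zero_add, hzin.mul_mul_eq_of_mul_eq_zero h]

theorem mul_flip_pow_right (hzin : IsZinbiel mul) {a y : Z} (k : ℕ)
    (hy : ∀ l < k, mul a ((mul.flip a ^ l) y) = 0) (x : Z) :
    mul x ((mul.flip a ^ k) y) = (mul.flip a ^ k) (mul x y) := by
  induction k with
  | zero => rfl
  | succ k ih =>
    rw [pow_succ', Module.End.mul_apply, Module.End.mul_apply, LinearMap.flip_apply,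
      LinearMap.flip_apply, ← hzin.mul_mul_eq_of_mul_eq_zero (hy k k.lt_succ_self),
      ih fun l hl => hy l (hl.trans k.lt_succ_self)]

theorem mul_flip_pow_left (hzin : IsZinbiel mul) {a y : Z} (hy : mul a y = 0) (t : ℕ)
    (x : Z) : mul ((mul.flip a ^ t) x) y = (mul.flip a ^ t) (mul x y) := by
  induction t with
  | zero => rfl
  | succ t ih =>
    rw [pow_succ', Module.End.mul_apply, Module.End.mul_apply, LinearMap.flip_apply,
      LinearMap.flip_apply, hzin.mul_mul_comm_of_mul_eq_zero hy, ih]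

theorem mul_flip_pow_mul_flip_pow (hzin : IsZinbiel mul) {a y : Z} (k : ℕ)
    (hy : ∀ l ≤ k, mul a ((mul.flip a ^ l) y) = 0) (t : ℕ) (x : Z) :
    mul ((mul.flip a ^ t) x) ((mul.flip a ^ k) y) = (mul.flip a ^ (t + k)) (mul x y) := by
  rw [hzin.mul_flip_pow_left (hy k le_rfl), hzin.mul_flip_pow_right k fun l hl => hy l hl.le,
    pow_add, Module.End.mul_apply]

variable {e : ℕ → Z} {m : ℕ}

theorem mul_chain_one (hzin : IsZinbiel mul)
    (hee : ∀ i, 1 ≤ i → i ≤ m → mul (e 1) (e i) = e (i + 1)) :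
    ∀ q, 1 ≤ q → q ≤ m → mul (e q) (e 1) = (q : ℂ) • e (q + 1)
  | 0, h, _ => absurd h (by omega)
  | 1, _, hm => by rw [hee 1 le_rfl hm, Nat.cast_one, one_smul]
  | q + 2, _, hq => by
    rw [← hee (q + 1) (by omega) (by omega), hzin,
      mul_chain_one hzin hee (q + 1) (by omega) (by omega), map_smul,
      hee (q + 1) (by omega) (by omega), hee (q + 2) (by omega) hq]
    push_cast
    module

theorem mul_flip_pow_chain_one (hzin : IsZinbiel mul)
    (hee : ∀ i, 1 ≤ i → i ≤ m → mul (e 1) (e i) = e (i + 1)) :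
    ∀ r ≤ m, (mul.flip (e 1) ^ r) (e 1) = (r.factorial : ℂ) • e (r + 1)
  | 0, _ => by simp
  | r + 1, hr => by
    rw [pow_succ', Module.End.mul_apply, mul_flip_pow_chain_one hzin hee r (by omega),
      map_smul, LinearMap.flip_apply,
      hzin.mul_chain_one hee (r + 1) (by omega) hr, smul_smul,
      Nat.factorial_succ]
    push_cast
    ring_nf

end IsZinbiel

theorem psum_zero (s : ℕ → ℕ) : psum s 0 = 0 := rfl

theorem psum_succ (s : ℕ → ℕ) (q : ℕ) : psum s (q + 1) = psum s q + s (q + 1) :=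
  Finset.sum_Icc_succ_top (by omega) s

theorem psum_add_le {s : ℕ → ℕ} {l j m : ℕ} (hj : j ≤ s (l + 1)) (hl : l + 1 ≤ m) :
    psum s l + j ≤ psum s m :=
  (psum_succ s l ▸ Nat.add_le_add_left hj _).trans (psum_mono s hl)

theorem adaptedFam_f_ne_zero {Z : Type*} [AddCommGroup Z] [Module ℂ Z] {m p : ℕ}
    {e f : ℕ → Z} (hli : LinearIndependent ℂ (adaptedFam m p e f)) {b : ℕ} (hb : 1 ≤ b)
    (hbp : b ≤ p) : f b ≠ 0 := by
  simpa [adaptedFam, Nat.sub_add_cancel hb] using hli.ne_zero (Sum.inr ⟨b - 1, by omega⟩)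

section Graded

variable {Z : Type*} [AddCommGroup Z] [Module ℂ Z] {mul : Z →ₗ[ℂ] Z →ₗ[ℂ] Z}
  {W : ℕ → Submodule ℂ Z} {e f : ℕ → Z} {s : ℕ → ℕ} {m : ℕ}

theorem f_mem_of_psum_lt_of_le
    (hWspan : ∀ i, 1 ≤ i → i ≤ m →
      W i = span ℂ (insert (e i) (f '' Set.Icc (psum s (i - 1) + 1) (psum s i))))
    {q b : ℕ} (hq : q + 1 ≤ m) (hb : psum s q < b) (hb' : b ≤ psum s (q + 1)) :
    f b ∈ W (q + 1) := by
  rw [hWspan (q + 1) (by omega) hq]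
  exact subset_span (Set.mem_insert_of_mem _ ⟨b, ⟨hb, hb'⟩, rfl⟩)

theorem antitoneOn_of_shift_raises_degree {p : ℕ} (hW : iSupIndep W)
    (hWmul : ∀ i j, ∀ x ∈ W i, ∀ y ∈ W j, mul x y ∈ W (i + j)) (he1 : e 1 ∈ W 1)
    (hWspan : ∀ i, 1 ≤ i → i ≤ m →
      W i = span ℂ (insert (e i) (f '' Set.Icc (psum s (i - 1) + 1) (psum s i))))
    (hli : LinearIndependent ℂ (adaptedFam m p e f)) (hsum : psum s m = p)
    (hshift : ∀ t i, 1 ≤ t → t ≤ m - 1 → 1 ≤ i → i ≤ s (t + 1) →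
      mul (f (psum s (t - 1) + i)) (e 1) = f (psum s t + i)) :
    AntitoneOn s (Set.Icc 1 m) := by
  refine antitoneOn_of_add_one_le Set.ordConnected_Icc fun q _ hq hq1 => ?_
  by_contra! hlt
  obtain ⟨q, rfl⟩ : ∃ r, q = r + 1 := ⟨q - 1, by grind⟩
  have hq' : q + 2 ≤ m := hq1.2
  have hps := psum_succ s q
  have hps' := psum_succ s (q + 1)
  have hshift' := hshift (q + 1) (s (q + 1) + 1) (by omega) (by omega) (by omega) (by omega)
  rw [Nat.add_sub_cancel] at hshift'
  have hsrc : f (psum s q + (s (q + 1) + 1)) ∈ W (q + 1 + 1) :=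
    f_mem_of_psum_lt_of_le hWspan hq' (by omega) (by omega)
  have htgt : f (psum s (q + 1) + (s (q + 1) + 1)) ∈ W (q + 1 + 1) :=
    f_mem_of_psum_lt_of_le hWspan hq' (by omega) (by omega)
  have hprod : f (psum s (q + 1) + (s (q + 1) + 1)) ∈ W (q + 1 + 1 + 1) :=
    hshift' ▸ hWmul _ _ _ hsrc _ he1
  refine adaptedFam_f_ne_zero hli (by omega) ?_
    (disjoint_def.mp (hW.pairwiseDisjoint (by omega)) _ htgt hprod)
  exact hsum ▸ psum_add_le (l := q + 1) (by omega) hq'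

theorem f_eq_mul_flip_pow (hs : AntitoneOn s (Set.Icc 1 m))
    (hshift : ∀ t i, 1 ≤ t → t ≤ m - 1 → 1 ≤ i → i ≤ s (t + 1) →
      mul (f (psum s (t - 1) + i)) (e 1) = f (psum s t + i)) :
    ∀ t i, t + 1 ≤ m → 1 ≤ i → i ≤ s (t + 1) →
      f (psum s t + i) = (mul.flip (e 1) ^ t) (f i)
  | 0, i, _, _, _ => by rw [psum_zero, zero_add]; rfl
  | t + 1, i, ht, hi1, hi => by
    have hi' : i ≤ s (t + 1) := hi.trans (hs ⟨by omega, by omega⟩ ⟨by omega, ht⟩ (by omega))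
    rw [pow_succ', Module.End.mul_apply, ← f_eq_mul_flip_pow hs hshift t i (by omega) hi1 hi',
      LinearMap.flip_apply, ← hshift (t + 1) i (by omega) (by omega) hi1 hi, Nat.add_sub_cancel]

end Graded

theorem graded_p_filiform_ff_general_general
    {Z : Type*} [AddCommGroup Z] [Module ℂ Z]
    (mul : Z →ₗ[ℂ] Z →ₗ[ℂ] Z) (hzin : IsZinbiel mul)
    (n p : ℕ)
    (e f : ℕ → Z)
    -- `{e_1, …, e_{n-p}, f_1, …, f_p}` is a basis of the `n`-dimensional algebra `Z`
    (hli : LinearIndependent ℂ (adaptedFam (n - p) p e f))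
    -- the basis is adapted of first type: `e_1 ∘ e_i = e_{i+1}`, `e_1 ∘ e_{n-p} = 0`,
    -- `e_1 ∘ f_j = 0`
    (hee : ∀ i, 1 ≤ i → i ≤ n - p - 1 → mul (e 1) (e i) = e (i + 1))
    (hef : ∀ j, 1 ≤ j → j ≤ p → mul (e 1) (f j) = 0)
    -- the natural gradation `Z = Z_1 ⊕ ⋯ ⊕ Z_{n-p}` : `W i` is the `i`-th component,
    -- the gradation is multiplicative and generated in degree one
    -- (`Z_{i+1} = Z_1 ∘ Z_i`, coming from `Z_i = Z^i/Z^{i+1}`), and `e_i ∈ Z_i`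
    (W : ℕ → Submodule ℂ Z)
    (hWint : DirectSum.IsInternal W)
    (hWmul : ∀ i j, ∀ x ∈ W i, ∀ y ∈ W j, mul x y ∈ W (i + j))
    (heW : ∀ i, 1 ≤ i → i ≤ n - p → e i ∈ W i)
    -- `s_i = dim Z_i - 1` and
    -- `Z_i = ⟨e_i, f_{s_1+⋯+s_{i-1}+1}, …, f_{s_1+⋯+s_i}⟩` for `1 ≤ i ≤ n-p`
    (s : ℕ → ℕ) (hshigh : ∀ i, n - p < i → s i = 0)
    (hsum : psum s (n - p) = p)
    (hWspan : ∀ i, 1 ≤ i → i ≤ n - p →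
      W i = Submodule.span ℂ (insert (e i) (f '' Set.Icc (psum s (i - 1) + 1) (psum s i))))
    -- the basis is normalized so that `f_{s_1+⋯+s_{t-1}+i} ∘ e_1 = f_{s_1+⋯+s_t+i}`
    -- for `1 ≤ i ≤ s_{t+1}` and `= 0` for `s_{t+1}+1 ≤ i ≤ s_t`
    (hnorm : ∀ t i, 1 ≤ t → t ≤ n - p - 1 →
      (1 ≤ i → i ≤ s (t + 1) → mul (f (psum s (t - 1) + i)) (e 1) = f (psum s t + i)) ∧
      (s (t + 1) + 1 ≤ i → i ≤ s t → mul (f (psum s (t - 1) + i)) (e 1) = 0))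
    -- the scalars `γ_{ij}` with `f_i ∘ f_j = γ_{ij} e_2 = -f_j ∘ f_i` for `1 ≤ i, j ≤ s_1`
    (γ : ℕ → ℕ → ℂ)
    (hγ : ∀ i j, 1 ≤ i → i ≤ s 1 → 1 ≤ j → j ≤ s 1 → mul (f i) (f j) = γ i j • e 2)
    :
    ∀ t k i j, t + k ≤ n - p - 2 → 1 ≤ i → i ≤ s (t + 2) → 1 ≤ j → j ≤ s (k + 2) →
      mul (f (psum s t + i)) (f (psum s k + j)) =
        (γ i j * (((t + k + 1).factorial : ℕ) : ℂ)) • e (t + k + 2) := by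
  intro t k i j htk hi1 hi2 hj1 hj2
  have ht : t + 2 ≤ n - p := by_contra fun h => by have := hshigh (t + 2) (by omega); omega
  have hk : k + 2 ≤ n - p := by_contra fun h => by have := hshigh (k + 2) (by omega); omega
  have hshift := fun t i h1 h2 => (hnorm t i h1 h2).1
  have hs : AntitoneOn s (Set.Icc 1 (n - p)) := antitoneOn_of_shift_raises_degree
    hWint.submodule_iSupIndep hWmul (heW 1 le_rfl (by omega)) hWspan hli hsum hshift
  have hs_le {a b : ℕ} (ha : 1 ≤ a) (hab : a ≤ b) (hb : b ≤ n - p) : s b ≤ s a :=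
    hs ⟨ha, hab.trans hb⟩ ⟨ha.trans hab, hb⟩ hab
  have hfj : ∀ l ≤ k, f (psum s l + j) = (mul.flip (e 1) ^ l) (f j) := fun l hl =>
    f_eq_mul_flip_pow hs hshift l j (by omega) hj1 (hj2.trans (hs_le (by omega) (by omega) hk))
  have hann : ∀ l ≤ k, mul (e 1) ((mul.flip (e 1) ^ l) (f j)) = 0 := fun l hl =>
    hfj l hl ▸ hef _ (by omega) (hsum ▸ psum_add_le
      (hj2.trans (hs_le (by omega) (by omega) hk)) (by omega))
  rw [f_eq_mul_flip_pow hs hshift t i (by omega) hi1 (hi2.trans (hs_le (by omega) (by omega) ht)),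
    hfj k le_rfl, hzin.mul_flip_pow_mul_flip_pow k hann,
    hγ i j hi1 (hi2.trans (hs_le le_rfl (by omega) ht)) hj1
      (hj2.trans (hs_le le_rfl (by omega) hk)),
    map_smul, ← hee 1 le_rfl (by omega), ← LinearMap.flip_apply mul, ← Module.End.mul_apply,
    ← pow_succ, hzin.mul_flip_pow_chain_one hee (t + k + 1) (by omega), smul_smul]

/-- Lemma (`lema2`): in the normalized adapted basis, with `f_i ∘ f_j = γ_{ij} e_2` for
`1 ≤ i, j ≤ s_1`, one has
`f_{s_1+⋯+s_t+i} ∘ f_{s_1+⋯+s_k+j} = γ_{ij} (t+k+1)! e_{t+k+2}` for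
`0 ≤ k + t ≤ n-p-2`, `1 ≤ i ≤ s_{t+2}` and `1 ≤ j ≤ s_{k+2}`. -/
theorem graded_p_filiform_ff_general
    {Z : Type*} [AddCommGroup Z] [Module ℂ Z]
    (mul : Z →ₗ[ℂ] Z →ₗ[ℂ] Z) (hzin : IsZinbiel mul)
    (n p : ℕ) (hpn : p < n)
    (e f : ℕ → Z)
    -- `{e_1, …, e_{n-p}, f_1, …, f_p}` is a basis of the `n`-dimensional algebra `Z`
    (hli : LinearIndependent ℂ (adaptedFam (n - p) p e f))
    (hsp : Submodule.span ℂ (Set.range (adaptedFam (n - p) p e f)) = ⊤)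
    -- the basis is adapted of first type: `e_1 ∘ e_i = e_{i+1}`, `e_1 ∘ e_{n-p} = 0`,
    -- `e_1 ∘ f_j = 0`
    (hee : ∀ i, 1 ≤ i → i ≤ n - p - 1 → mul (e 1) (e i) = e (i + 1))
    (hetop : mul (e 1) (e (n - p)) = 0)
    (hef : ∀ j, 1 ≤ j → j ≤ p → mul (e 1) (f j) = 0)
    -- the natural gradation `Z = Z_1 ⊕ ⋯ ⊕ Z_{n-p}` : `W i` is the `i`-th component,
    -- the gradation is multiplicative and generated in degree one
    -- (`Z_{i+1} = Z_1 ∘ Z_i`, coming from `Z_i = Z^i/Z^{i+1}`), and `e_i ∈ Z_i`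
    (W : ℕ → Submodule ℂ Z)
    (hW0 : W 0 = ⊥)
    (hWhigh : ∀ i, n - p < i → W i = ⊥)
    (hWint : DirectSum.IsInternal W)
    (hWmul : ∀ i j, ∀ x ∈ W i, ∀ y ∈ W j, mul x y ∈ W (i + j))
    (hWgen : ∀ i, 1 ≤ i → W (i + 1) = Submodule.span ℂ {z | ∃ x ∈ W 1, ∃ y ∈ W i, z = mul x y})
    (heW : ∀ i, 1 ≤ i → i ≤ n - p → e i ∈ W i)
    -- `Z` is `p`-filiform with characteristic vector `e_1 ∉ Z²`
    (hfil : CharSeqMax mul n p)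
    (he1sq : e 1 ∉ algSq mul)
    -- `s_i = dim Z_i - 1` and
    -- `Z_i = ⟨e_i, f_{s_1+⋯+s_{i-1}+1}, …, f_{s_1+⋯+s_i}⟩` for `1 ≤ i ≤ n-p`
    (s : ℕ → ℕ) (hs0 : s 0 = 0) (hshigh : ∀ i, n - p < i → s i = 0)
    (hsum : psum s (n - p) = p)
    (hWspan : ∀ i, 1 ≤ i → i ≤ n - p →
      W i = Submodule.span ℂ (insert (e i) (f '' Set.Icc (psum s (i - 1) + 1) (psum s i))))
    -- the basis is normalized so that `f_{s_1+⋯+s_{t-1}+i} ∘ e_1 = f_{s_1+⋯+s_t+i}`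
    -- for `1 ≤ i ≤ s_{t+1}` and `= 0` for `s_{t+1}+1 ≤ i ≤ s_t`
    (hnorm : ∀ t i, 1 ≤ t → t ≤ n - p - 1 →
      (1 ≤ i → i ≤ s (t + 1) → mul (f (psum s (t - 1) + i)) (e 1) = f (psum s t + i)) ∧
      (s (t + 1) + 1 ≤ i → i ≤ s t → mul (f (psum s (t - 1) + i)) (e 1) = 0))
    -- the scalars `γ_{ij}` with `f_i ∘ f_j = γ_{ij} e_2 = -f_j ∘ f_i` for `1 ≤ i, j ≤ s_1`
    (γ : ℕ → ℕ → ℂ)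
    (hγ : ∀ i j, 1 ≤ i → i ≤ s 1 → 1 ≤ j → j ≤ s 1 → mul (f i) (f j) = γ i j • e 2)
    (hγanti : ∀ i j, 1 ≤ i → i ≤ s 1 → 1 ≤ j → j ≤ s 1 → γ i j = -γ j i)
    :
    ∀ t k i j, t + k ≤ n - p - 2 → 1 ≤ i → i ≤ s (t + 2) → 1 ≤ j → j ≤ s (k + 2) →
      mul (f (psum s t + i)) (f (psum s k + j)) =
        (γ i j * (((t + k + 1).factorial : ℕ) : ℂ)) • e (t + k + 2) :=
  graded_p_filiform_ff_general_general mul hzin n p e f hli hee hef W hWint hWmul heW s hshigh hsum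
    hWspan hnorm γ hγ
end
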